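/- arXiv:1805.02886 — 6 statements merged into one kernel-verified Lean document; each statement's English description precedes it below -/
import Mathlib

section
/- For all integers m ≥ 2 and t ≥ 1, the coconut tree CT(m,t) satisfies χ_la(CT(m,t)) = t + 2. -/
open scoped BigOperators

/-- The induced vertex sum: sum of labels of edges incident to `v`. -/
noncomputable def vertexSum {V : Type*} (G : SimpleGraph V) (f : Sym2 V → ℕ) (v : V) : ℕ :=
  ∑ᶠ e ∈ G.incidenceSet v, f e

/-- `f` is a local antimagic labeling of `G`: a bijection from the edge set onto
`{1, …, |E(G)|}` such that adjacent vertices get distinct induced sums. -/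
def IsLocalAntimagic {V : Type*} (G : SimpleGraph V) (f : Sym2 V → ℕ) : Prop :=
  Set.BijOn f G.edgeSet (Set.Icc 1 G.edgeSet.ncard) ∧
  ∀ u v, G.Adj u v → vertexSum G f u ≠ vertexSum G f v

/-- Number of distinct induced vertex labels of the labeling `f`. -/
noncomputable def colorCount {V : Type*} (G : SimpleGraph V) (f : Sym2 V → ℕ) : ℕ :=
  (Set.range (vertexSum G f)).ncard

/-- The local antimagic chromatic number. -/
noncomputable def chiLA {V : Type*} (G : SimpleGraph V) : ℕ :=
  sInf { n | ∃ f, IsLocalAntimagic G f ∧ colorCount G f = n }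

/-- The join `G ∨ Oₙ` of `G` with the empty graph on `n` vertices. -/
def joinEmpty {V : Type*} (G : SimpleGraph V) (n : ℕ) : SimpleGraph (V ⊕ Fin n) :=
  SimpleGraph.fromRel (fun x y =>
    (∃ a b, x = Sum.inl a ∧ y = Sum.inl b ∧ G.Adj a b) ∨ (x.isLeft ∧ y.isRight))

/-- The coconut tree `CT(m,t)`: a path `v₀ … v_{m-1}` with `t` extra leaves attached
to the end-vertex `v_{m-1}`. -/
def coconutTree (m t : ℕ) : SimpleGraph (Fin m ⊕ Fin t) :=
  SimpleGraph.fromRel (fun x y =>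
    (∃ a b : Fin m, x = Sum.inl a ∧ y = Sum.inl b ∧ (b : ℕ) = (a : ℕ) + 1) ∨
    (∃ (a : Fin m) (j : Fin t), x = Sum.inl a ∧ y = Sum.inr j ∧ (a : ℕ) = m - 1))

/-!
Lower bound: the end `v₀` of the path and the `t` leaves at the centre are pendant vertices
with distinct pendant edges, so their sums are `t + 1` distinct labels, all at most `|E|`; the edge labelled `|E|` has an endpoint of degree at least two, whose sum exceeds `|E|`.

Upper bound: list the edges along the path from `v₀`, then the pendant edges at the centre,
and give the `k`-th of them (from `k = 0`) the label `m, 1, m - 1, 2, …` for `k < m` and `k + 1`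
for `k ≥ m`. Consecutive labels among the first `m` sum alternately to `m` and `m + 1`, so every
path vertex other than the centre has sum `m` or `m + 1`; so does the centre if `t = 1`, while
for `t ≥ 2` its sum exceeds every label. The sums are thus `m`, `m + 1`, the centre's sum and
the `t` pendant labels, which include `m + 1` when `t ≥ 2`.
-/

section LocalAntimagic

open Function Set SimpleGraph

variable {V : Type*} {G : SimpleGraph V} {f : Sym2 V → ℕ}

theorem vertexSum_eq_of_incidenceSet_eq_singleton {v : V} {e : Sym2 V}
    (h : G.incidenceSet v = {e}) : vertexSum G f v = f e := by
  rw [vertexSum, h, finsum_mem_singleton]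

theorem add_le_vertexSum [Finite V] {v : V} {e e' : Sym2 V} (he : e ∈ G.incidenceSet v)
    (he' : e' ∈ G.incidenceSet v) (hne : e ≠ e') : f e + f e' ≤ vertexSum G f v := by
  classical
  rw [vertexSum, finsum_mem_eq_finite_toFinset_sum _ (toFinite _), ← Finset.sum_pair hne]
  exact Finset.sum_le_sum_of_subset (by simp [Set.insert_subset_iff, he, he'])

theorem colorCount_le_card {S : Finset ℕ} (hS : ∀ v, vertexSum G f v ∈ S) :
    colorCount G f ≤ S.card := by
  rw [colorCount, ← ncard_coe_finset]
  exact ncard_le_ncard (by rintro _ ⟨v, rfl⟩; exact hS v) S.finite_toSet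

theorem card_add_one_le_colorCount [Finite V]
    (hf : BijOn f G.edgeSet (Icc 1 G.edgeSet.ncard)) (hE : G.edgeSet.Nonempty)
    (hbranch : ∀ e ∈ G.edgeSet, ∃ v ∈ e, ∃ e' ∈ G.incidenceSet v, e' ≠ e)
    {L : Finset V} (hpendant : ∀ v ∈ L, ∃ e, G.incidenceSet v = {e}) (hL : G.IsIndepSet L) :
    L.card + 1 ≤ colorCount G f := by
  classical
  set n := G.edgeSet.ncard
  obtain ⟨e, he, hfe⟩ := hf.surjOn ⟨(ncard_pos (toFinite _)).2 hE, le_rfl⟩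
  obtain ⟨w, hwe, e', he', hne⟩ := hbranch e he
  have hbig : n < vertexSum G f w := by
    have := add_le_vertexSum (f := f) ⟨he, hwe⟩ he' hne.symm
    have := (hf.mapsTo (G.incidenceSet_subset w he')).1
    omega
  have hsmall : ∀ v ∈ L, vertexSum G f v ≤ n := by
    intro v hv
    obtain ⟨e, hve⟩ := hpendant v hv
    rw [vertexSum_eq_of_incidenceSet_eq_singleton hve]
    exact (hf.mapsTo (G.incidenceSet_subset v (hve ▸ rfl))).2
  have hinj : InjOn (vertexSum G f) L := by
    intro u hu v hv huv
    obtain ⟨a, hua⟩ := hpendant u hu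
    obtain ⟨b, hvb⟩ := hpendant v hv
    have hau : a ∈ G.incidenceSet u := hua ▸ rfl
    have hbv : b ∈ G.incidenceSet v := hvb ▸ rfl
    rw [vertexSum_eq_of_incidenceSet_eq_singleton hua,
      vertexSum_eq_of_incidenceSet_eq_singleton hvb] at huv
    obtain rfl : a = b := hf.injOn hau.1 hbv.1 huv
    by_contra huv'
    have hadj : G.Adj u v := by
      rw [← mem_edgeSet, ← (Sym2.mem_and_mem_iff huv').1 ⟨hau.2, hbv.2⟩]
      exact hau.1
    exact hL hu hv huv' hadj
  calc L.card + 1 = (insert (vertexSum G f w) (L.image (vertexSum G f))).card := by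
        rw [Finset.card_insert_of_notMem, Finset.card_image_of_injOn hinj]
        simp only [Finset.mem_image, not_exists, not_and]
        exact fun v hv h => (hsmall v hv).not_gt (h ▸ hbig)
    _ ≤ colorCount G f := by
        rw [colorCount, ← ncard_coe_finset]
        exact ncard_le_ncard (by simp [Set.insert_subset_iff]) (toFinite _)

theorem chiLA_eq_of_forall_le_colorCount {k : ℕ}
    (hex : ∃ f, IsLocalAntimagic G f ∧ colorCount G f ≤ k)
    (hle : ∀ f, IsLocalAntimagic G f → k ≤ colorCount G f) : chiLA G = k := by
  obtain ⟨f, hf, hfk⟩ := hex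
  have hmem : k ∈ {n | ∃ f, IsLocalAntimagic G f ∧ colorCount G f = n} :=
    ⟨f, hf, le_antisymm hfk (hle f hf)⟩
  exact le_antisymm (Nat.sInf_le hmem)
    (le_csInf ⟨k, hmem⟩ fun n ⟨g, hg, hgn⟩ => hgn ▸ hle g hg)

section EdgeEnumeration

variable {ι : Type*} {E : ι → Sym2 V}

theorem incidenceSet_eq_image (hE : range E = G.edgeSet) (v : V) :
    G.incidenceSet v = E '' {i | v ∈ E i} := by
  ext e
  simp only [incidenceSet, ← hE, mem_ofPred_eq, mem_image, mem_range]
  constructor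
  · rintro ⟨⟨i, rfl⟩, hv⟩
    exact ⟨i, hv, rfl⟩
  · rintro ⟨i, hv, rfl⟩
    exact ⟨⟨i, rfl⟩, hv⟩

theorem vertexSum_eq_finsum (hinj : Injective E) (hE : range E = G.edgeSet) (v : V) :
    vertexSum G f v = ∑ᶠ i ∈ {i | v ∈ E i}, f (E i) := by
  rw [vertexSum, incidenceSet_eq_image hE, finsum_mem_image hinj.injOn]

theorem bijOn_extend [Fintype ι] (hinj : Injective E) (hE : range E = G.edgeSet) {l : ι → ℕ}
    (hl : Injective l) (hmem : ∀ i, l i ∈ Icc 1 (Fintype.card ι)) :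
    BijOn (extend E l 0) G.edgeSet (Icc 1 G.edgeSet.ncard) := by
  rw [← hE, ncard_range_of_injective hinj, Nat.card_eq_fintype_card]
  refine ⟨?_, ?_, ?_⟩
  · rintro _ ⟨i, rfl⟩
    rw [hinj.extend_apply]
    exact hmem i
  · rintro _ ⟨i, rfl⟩ _ ⟨j, rfl⟩ h
    rw [hinj.extend_apply, hinj.extend_apply] at h
    rw [hl h]
  · have hsurj : SurjOn l (Finset.univ : Finset ι) (Finset.Icc 1 (Fintype.card ι)) :=
      Finset.surjOn_of_injOn_of_card_le l (fun i _ => Finset.mem_Icc.2 (hmem i)) hl.injOn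
        (by simp)
    intro k hk
    obtain ⟨i, -, rfl⟩ := hsurj (by simpa using hk)
    exact ⟨E i, mem_range_self i, hinj.extend_apply l 0 i⟩

theorem IsLocalAntimagic.of_ends {ends : ι → V × V}
    (hE : range (fun i => s((ends i).1, (ends i).2)) = G.edgeSet)
    (hf : BijOn f G.edgeSet (Icc 1 G.edgeSet.ncard))
    (hsum : ∀ i, vertexSum G f (ends i).1 ≠ vertexSum G f (ends i).2) :
    IsLocalAntimagic G f := by
  refine ⟨hf, fun u v huv => ?_⟩
  obtain ⟨i, hi⟩ : s(u, v) ∈ range (fun i => s((ends i).1, (ends i).2)) := hE ▸ huv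
  rcases (Sym2.mk_eq_mk_iff (p := ends i) (q := (u, v))).1 hi with h | h
  · simpa [h] using hsum i
  · simpa [h] using (hsum i).symm

end EdgeEnumeration

end LocalAntimagic

section CoconutTree

open Function Set Sum SimpleGraph

variable {M T : ℕ}

def coconutEnds (M T : ℕ) :
    Fin (M + 1) ⊕ Fin (T + 1) → (Fin (M + 2) ⊕ Fin (T + 1)) × (Fin (M + 2) ⊕ Fin (T + 1))
  | inl i => (inl i.castSucc, inl i.succ)
  | inr j => (inl (Fin.last (M + 1)), inr j)

def coconutEdge (M T : ℕ) (i : Fin (M + 1) ⊕ Fin (T + 1)) :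
    Sym2 (Fin (M + 2) ⊕ Fin (T + 1)) :=
  s((coconutEnds M T i).1, (coconutEnds M T i).2)

@[simp] theorem coconutEdge_inl (i : Fin (M + 1)) :
    coconutEdge M T (inl i) = s(inl i.castSucc, inl i.succ) := rfl

@[simp] theorem coconutEdge_inr (j : Fin (T + 1)) :
    coconutEdge M T (inr j) = s(inl (Fin.last (M + 1)), inr j) := rfl

theorem coconutEdge_injective : Injective (coconutEdge M T) := by
  rintro (i | j) (i' | j') h <;> simp [Fin.ext_iff] at h ⊢ <;> omega

theorem range_coconutEdge : range (coconutEdge M T) = (coconutTree (M + 2) (T + 1)).edgeSet := by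
  refine Subset.antisymm ?_ fun e he => ?_
  · rintro _ ⟨i | j, rfl⟩ <;>
      simp only [coconutEdge_inl, coconutEdge_inr, mem_edgeSet, coconutTree, fromRel_adj]
    · exact ⟨by simp [Fin.ext_iff], .inl (.inl ⟨_, _, rfl, rfl, by simp⟩)⟩
    · exact ⟨by simp, .inl (.inr ⟨_, _, rfl, rfl, by simp⟩)⟩
  induction e using Sym2.ind with
  | h x y =>
  simp only [mem_edgeSet, coconutTree, fromRel_adj] at he
  obtain ⟨-, (⟨a, b, rfl, rfl, hab⟩ | ⟨a, j, rfl, rfl, ha⟩) |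
    (⟨a, b, rfl, rfl, hab⟩ | ⟨a, j, rfl, rfl, ha⟩)⟩ := he
  · exact ⟨inl ⟨a, by omega⟩, by simp [Fin.ext_iff, hab]⟩
  · exact ⟨inr j, by simp [Fin.ext_iff, ha]⟩
  · exact ⟨inl ⟨a, by omega⟩, by simp [Sym2.eq_swap, Fin.ext_iff, hab]⟩
  · exact ⟨inr j, by simp [Sym2.eq_swap, Fin.ext_iff, ha]⟩

theorem setOf_inl_zero_mem_coconutEdge : {i | inl 0 ∈ coconutEdge M T i} = {inl 0} := by
  ext (i | j)
  · simp [eq_comm (a := (0 : Fin (M + 2)))]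
  · simp

theorem setOf_inl_mem_coconutEdge {k : Fin (M + 2)} (h0 : 0 < (k : ℕ)) (hM : (k : ℕ) < M + 1) :
    {i | inl k ∈ coconutEdge M T i} = {inl ⟨k - 1, by omega⟩, inl ⟨k, hM⟩} := by
  ext (i | j) <;> simp [Fin.ext_iff] <;> omega

theorem setOf_inl_last_mem_coconutEdge :
    {i | inl (Fin.last (M + 1)) ∈ coconutEdge M T i} = insert (inl (Fin.last M)) (range inr) := by
  ext (i | j) <;> simp [Fin.ext_iff]
  omega

theorem setOf_inr_mem_coconutEdge (j : Fin (T + 1)) :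
    {i | inr j ∈ coconutEdge M T i} = {inr j} := by
  ext (i | j) <;> simp [eq_comm]

theorem incidenceSet_coconutTree_inl_zero :
    (coconutTree (M + 2) (T + 1)).incidenceSet (inl 0) = {coconutEdge M T (inl 0)} := by
  rw [incidenceSet_eq_image range_coconutEdge, setOf_inl_zero_mem_coconutEdge, image_singleton]

theorem incidenceSet_coconutTree_inr (j : Fin (T + 1)) :
    (coconutTree (M + 2) (T + 1)).incidenceSet (inr j) = {coconutEdge M T (inr j)} := by
  rw [incidenceSet_eq_image range_coconutEdge, setOf_inr_mem_coconutEdge, image_singleton]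

theorem vertexSum_coconutTree_inl {f : Sym2 (Fin (M + 2) ⊕ Fin (T + 1)) → ℕ} {k : Fin (M + 2)}
    (h0 : 0 < (k : ℕ)) (hM : (k : ℕ) < M + 1) :
    vertexSum (coconutTree (M + 2) (T + 1)) f (inl k) =
      f (coconutEdge M T (inl ⟨k - 1, by omega⟩)) + f (coconutEdge M T (inl ⟨k, hM⟩)) := by
  rw [vertexSum_eq_finsum coconutEdge_injective range_coconutEdge,
    setOf_inl_mem_coconutEdge h0 hM, finsum_mem_pair (by simp [Fin.ext_iff]; omega)]

theorem vertexSum_coconutTree_inl_last (f : Sym2 (Fin (M + 2) ⊕ Fin (T + 1)) → ℕ) :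
    vertexSum (coconutTree (M + 2) (T + 1)) f (inl (Fin.last (M + 1))) =
      f (coconutEdge M T (inl (Fin.last M))) + ∑ j, f (coconutEdge M T (inr j)) := by
  rw [vertexSum_eq_finsum coconutEdge_injective range_coconutEdge,
    setOf_inl_last_mem_coconutEdge, finsum_mem_insert _ (by simp) (toFinite _),
    finsum_mem_range inr_injective, finsum_eq_sum_of_fintype]

theorem coconutTree_exists_incidenceSet_ne :
    ∀ e ∈ (coconutTree (M + 2) (T + 1)).edgeSet,
      ∃ v ∈ e, ∃ e' ∈ (coconutTree (M + 2) (T + 1)).incidenceSet v, e' ≠ e := by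
  rw [← range_coconutEdge]
  rintro _ ⟨i | j, rfl⟩
  · refine ⟨inl i.succ, by simp, ?_⟩
    rw [incidenceSet_eq_image range_coconutEdge]
    by_cases hi : (i : ℕ) < M
    · exact ⟨_, ⟨inl ⟨i + 1, by omega⟩, by simp [Fin.ext_iff], rfl⟩,
        coconutEdge_injective.ne (by simp [Fin.ext_iff])⟩
    · exact ⟨_, ⟨inr 0, by simp [Fin.ext_iff]; omega, rfl⟩,
        coconutEdge_injective.ne (by simp)⟩
  · refine ⟨inl (Fin.last (M + 1)), by simp, ?_⟩
    rw [incidenceSet_eq_image range_coconutEdge]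
    exact ⟨_, ⟨inl (Fin.last M), by simp, rfl⟩, coconutEdge_injective.ne (by simp)⟩

theorem le_colorCount_coconutTree {f : Sym2 (Fin (M + 2) ⊕ Fin (T + 1)) → ℕ}
    (hf : BijOn f (coconutTree (M + 2) (T + 1)).edgeSet
      (Icc 1 (coconutTree (M + 2) (T + 1)).edgeSet.ncard)) :
    T + 3 ≤ colorCount (coconutTree (M + 2) (T + 1)) f := by
  classical
  set L : Finset (Fin (M + 2) ⊕ Fin (T + 1)) := insert (inl 0) (Finset.univ.map Embedding.inr)
  have hL : L.card = T + 2 := by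
    rw [Finset.card_insert_of_notMem (by simp), Finset.card_map, Finset.card_univ,
      Fintype.card_fin]
  rw [show T + 3 = L.card + 1 by omega]
  refine card_add_one_le_colorCount hf ⟨_, range_coconutEdge ▸ mem_range_self (inl 0)⟩
    coconutTree_exists_incidenceSet_ne ?_ ?_
  · simp only [L, Finset.mem_insert, Finset.mem_map, Finset.mem_univ, true_and]
    rintro v (rfl | ⟨j, rfl⟩)
    · exact ⟨_, incidenceSet_coconutTree_inl_zero⟩
    · exact ⟨_, incidenceSet_coconutTree_inr j⟩
  · intro u hu v hv _
    simp only [L, Finset.coe_insert, Finset.coe_map, Finset.coe_univ, image_univ, mem_insert_iff,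
      mem_range] at hu hv
    rcases hu with rfl | ⟨j, rfl⟩ <;> rcases hv with rfl | ⟨j', rfl⟩ <;> simp [coconutTree]

end CoconutTree

section CoconutLabeling

open Function Set Sum SimpleGraph

variable {M T : ℕ}

def coconutLabel (M k : ℕ) : ℕ :=
  if M + 1 < k then k + 1 else if k % 2 = 1 then (k + 1) / 2 else M + 2 - k / 2

theorem coconutLabel_injective : Injective (coconutLabel M) := by
  intro a b h
  unfold coconutLabel at h
  split_ifs at h <;> omega

theorem coconutLabel_mem_Icc {k n : ℕ} (hk : k < n) (hn : M + 2 ≤ n) :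
    coconutLabel M k ∈ Icc 1 n := by
  unfold coconutLabel
  constructor <;> split_ifs <;> omega

theorem coconutLabel_of_lt {k : ℕ} (hk : M + 1 < k) : coconutLabel M k = k + 1 :=
  if_pos hk

theorem coconutLabel_le_of_pos {k : ℕ} (h0 : 0 < k) (hk : k ≤ M + 1) :
    coconutLabel M k ≤ M + 1 := by
  unfold coconutLabel
  split_ifs <;> omega

theorem coconutLabel_pred_add {k : ℕ} (h0 : 0 < k) (hM : k ≤ M + 1) :
    coconutLabel M (k - 1) + coconutLabel M k = M + 2 + k % 2 := by
  unfold coconutLabel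
  split_ifs <;> omega

noncomputable def coconutLabeling (M T : ℕ) : Sym2 (Fin (M + 2) ⊕ Fin (T + 1)) → ℕ :=
  extend (coconutEdge M T) (fun i => coconutLabel M (finSumFinEquiv i)) 0

theorem coconutLabeling_coconutEdge_inl (i : Fin (M + 1)) :
    coconutLabeling M T (coconutEdge M T (inl i)) = coconutLabel M i := by
  rw [coconutLabeling, coconutEdge_injective.extend_apply]
  simp

theorem coconutLabeling_coconutEdge_inr (j : Fin (T + 1)) :
    coconutLabeling M T (coconutEdge M T (inr j)) = coconutLabel M (M + 1 + j) := by
  rw [coconutLabeling, coconutEdge_injective.extend_apply]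
  simp

theorem bijOn_coconutLabeling :
    BijOn (coconutLabeling M T) (coconutTree (M + 2) (T + 1)).edgeSet
      (Icc 1 (coconutTree (M + 2) (T + 1)).edgeSet.ncard) := by
  refine bijOn_extend coconutEdge_injective range_coconutEdge
    (fun x y h => finSumFinEquiv.injective (Fin.ext (coconutLabel_injective h))) fun x => ?_
  simpa using coconutLabel_mem_Icc (finSumFinEquiv x).isLt (by omega)

theorem vertexSum_coconutLabeling_inl {k : Fin (M + 2)} (hk : (k : ℕ) ≤ M ∨ T = 0) :
    vertexSum (coconutTree (M + 2) (T + 1)) (coconutLabeling M T) (inl k) = M + 2 + k % 2 := by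
  rcases Nat.eq_zero_or_pos (k : ℕ) with h0 | h0
  · obtain rfl : k = 0 := Fin.ext h0
    rw [vertexSum_eq_of_incidenceSet_eq_singleton incidenceSet_coconutTree_inl_zero,
      coconutLabeling_coconutEdge_inl]
    simp [coconutLabel]
  by_cases hM : (k : ℕ) ≤ M
  · rw [vertexSum_coconutTree_inl h0 (by omega), coconutLabeling_coconutEdge_inl,
      coconutLabeling_coconutEdge_inl]
    exact coconutLabel_pred_add h0 (by omega)
  · obtain rfl : T = 0 := hk.resolve_left hM
    obtain rfl : k = Fin.last (M + 1) := Fin.ext (by simp only [Fin.val_last]; omega)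
    rw [vertexSum_coconutTree_inl_last, Fin.sum_univ_one, coconutLabeling_coconutEdge_inl,
      coconutLabeling_coconutEdge_inr]
    exact coconutLabel_pred_add h0 le_rfl

theorem vertexSum_coconutLabeling_inr (j : Fin (T + 1)) :
    vertexSum (coconutTree (M + 2) (T + 1)) (coconutLabeling M T) (inr j) =
      coconutLabel M (M + 1 + j) := by
  rw [vertexSum_eq_of_incidenceSet_eq_singleton (incidenceSet_coconutTree_inr j),
    coconutLabeling_coconutEdge_inr]

theorem lt_vertexSum_coconutLabeling_inl_last (hT : 0 < T) :
    M + T + 2 < vertexSum (coconutTree (M + 2) (T + 1)) (coconutLabeling M T)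
      (inl (Fin.last (M + 1))) := by
  have hlast : coconutLabel M (M + 1 + T) ≤ ∑ j : Fin (T + 1), coconutLabel M (M + 1 + j) :=
    Finset.single_le_sum (f := fun j : Fin (T + 1) => coconutLabel M (M + 1 + j))
      (fun _ _ => Nat.zero_le _) (Finset.mem_univ (Fin.last T))
  have hpos := (coconutLabel_mem_Icc (M := M) (n := M + 2) (k := M) (by omega) le_rfl).1
  rw [coconutLabel_of_lt (by omega)] at hlast
  rw [vertexSum_coconutTree_inl_last, coconutLabeling_coconutEdge_inl]
  simp only [coconutLabeling_coconutEdge_inr, Fin.val_last]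
  omega

theorem isLocalAntimagic_coconutLabeling :
    IsLocalAntimagic (coconutTree (M + 2) (T + 1)) (coconutLabeling M T) := by
  refine IsLocalAntimagic.of_ends range_coconutEdge bijOn_coconutLabeling ?_
  rintro (i | j) <;> simp only [coconutEnds]
  · rw [vertexSum_coconutLabeling_inl (.inl i.is_le)]
    by_cases hi : (i : ℕ) < M ∨ T = 0
    · rw [vertexSum_coconutLabeling_inl (hi.imp_left id)]
      simp only [Fin.val_castSucc, Fin.val_succ]
      omega
    obtain ⟨hiM, hT⟩ := not_or.1 hi
    obtain rfl : i = Fin.last M := Fin.ext (by simp only [Fin.val_last]; omega)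
    rw [Fin.succ_last]
    refine (lt_of_le_of_lt ?_ (lt_vertexSum_coconutLabeling_inl_last (Nat.pos_of_ne_zero hT))).ne
    simp only [Fin.val_castSucc, Fin.val_last]
    omega
  · rw [vertexSum_coconutLabeling_inr]
    rcases Nat.eq_zero_or_pos T with rfl | hT
    · obtain rfl := Fin.fin_one_eq_zero j
      rw [vertexSum_coconutLabeling_inl (.inr rfl)]
      have := coconutLabel_le_of_pos (M := M) (k := M + 1) (by omega) le_rfl
      simp only [Fin.val_zero, add_zero]
      omega
    · have := (coconutLabel_mem_Icc (M := M) (n := M + T + 2) (k := M + 1 + j) (by omega)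
        (by omega)).2
      exact (lt_of_le_of_lt this (lt_vertexSum_coconutLabeling_inl_last hT)).ne'

theorem colorCount_coconutLabeling_le :
    colorCount (coconutTree (M + 2) (T + 1)) (coconutLabeling M T) ≤ T + 3 := by
  set C := vertexSum (coconutTree (M + 2) (T + 1)) (coconutLabeling M T) (inl (Fin.last (M + 1)))
    with hC
  refine (colorCount_le_card (S := insert (coconutLabel M (M + 1))
    (insert C (insert (M + 3) (Finset.Icc (M + 2) (M + T + 2))))) ?_).trans ?_
  · rintro (k | ⟨j, hj⟩)
    · by_cases hk : (k : ℕ) ≤ M ∨ T = 0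
      · rw [vertexSum_coconutLabeling_inl hk]
        simp only [Finset.mem_insert, Finset.mem_Icc]
        omega
      · obtain rfl : k = Fin.last (M + 1) := Fin.ext (by simp only [Fin.val_last]; omega)
        simp [C]
    · rw [vertexSum_coconutLabeling_inr]
      rcases Nat.eq_zero_or_pos j with rfl | hj0
      · simp
      · rw [coconutLabel_of_lt (k := M + 1 + j) (by omega)]
        simp only [Finset.mem_insert, Finset.mem_Icc]
        omega
  · have hs : (insert C (insert (M + 3) (Finset.Icc (M + 2) (M + T + 2)))).card ≤ T + 2 := by
      rcases Nat.eq_zero_or_pos T with rfl | hT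
      · have hCmem : C ∈ insert (M + 3) (Finset.Icc (M + 2) (M + 0 + 2)) := by
          rw [hC, vertexSum_coconutLabeling_inl (.inr rfl)]
          simp only [Fin.val_last, Finset.mem_insert, Finset.mem_Icc]
          omega
        rw [Finset.insert_eq_of_mem hCmem]
        exact (Finset.card_insert_le _ _).trans (by simp)
      · rw [Finset.insert_eq_of_mem (show M + 3 ∈ Finset.Icc (M + 2) (M + T + 2) by simp; omega)]
        refine (Finset.card_insert_le _ _).trans ?_
        simp only [Nat.card_Icc]
        omega
    exact (Finset.card_insert_le _ _).trans (by omega)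

end CoconutLabeling

theorem chiLA_coconutTree (m t : ℕ) (hm : 2 ≤ m) (ht : 1 ≤ t) :
    chiLA (coconutTree m t) = t + 2 := by
  obtain ⟨M, rfl⟩ : ∃ M, m = M + 2 := ⟨m - 2, by omega⟩
  obtain ⟨T, rfl⟩ : ∃ T, t = T + 1 := ⟨t - 1, by omega⟩
  exact chiLA_eq_of_forall_le_colorCount
    ⟨_, isLocalAntimagic_coconutLabeling, colorCount_coconutLabeling_le⟩
    fun f hf => le_colorCount_coconutTree hf.1
end

section
/- There is no graph G of order 3 or 4 with χ_la(G) = 2. -/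
open scoped BigOperators

/-!
If a local antimagic labeling `f` has only two vertex sums `a ≠ b`, their level sets `s`, `t`
form a bipartition of `G`. Summing the vertex sums over either side counts every edge
label exactly once, so `#s * a = #t * b`, which rules out `#s = #t = 2`. If one side is a single
vertex `c`, then every edge passes through `c` and, `G` being connected, `G` is a star centred at
`c`; a leaf's vertex sum is the label of its edge, so injectivity of `f` leaves room for only one
leaf, too few for 3 or 4 vertices.
-/

open Finset SimpleGraph

variable {V : Type*} {G : SimpleGraph V} {f : Sym2 V → ℕ}

lemma exists_isLocalAntimagic_colorCount_eq_of_chiLA_eq {n : ℕ} (h : chiLA G = n) (hn : n ≠ 0) :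
    ∃ f, IsLocalAntimagic G f ∧ colorCount G f = n := by
  have hpos : 0 < chiLA G := by omega
  exact h ▸ Nat.sInf_mem (Nat.nonempty_of_pos_sInf hpos)

lemma isBipartiteWith_preimage {α : Type*} {φ : V → α} {a b : α} (hab : a ≠ b)
    (hφ : ∀ u v, G.Adj u v → φ u ≠ φ v) (hrange : ∀ v, φ v = a ∨ φ v = b) :
    G.IsBipartiteWith (φ ⁻¹' {a}) (φ ⁻¹' {b}) where
  disjoint := Set.disjoint_left.mpr fun v (hva : φ v = a) (hvb : φ v = b) => hab (hva ▸ hvb)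
  mem_of_adj u v huv := by
    have := hφ u v huv
    rcases hrange u with hu | hu <;> rcases hrange v with hv | hv <;> simp_all

lemma vertexSum_eq_sum_incidenceFinset [Fintype V] [DecidableEq V] [DecidableRel G.Adj] (v : V) :
    vertexSum G f v = ∑ e ∈ G.incidenceFinset v, f e := by
  rw [vertexSum, ← coe_incidenceFinset, finsum_mem_coe_finset]

lemma card_filter_mem_eq_one_of_isBipartiteWith [DecidableEq V] {s : Finset V} {t : Set V}
    (h : G.IsBipartiteWith s t) {e : Sym2 V} (he : e ∈ G.edgeSet) : #{v ∈ s | v ∈ e} = 1 := by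
  induction e using Sym2.ind with | _ u v => ?_
  have hnot : ∀ x ∈ t, x ∉ s := fun x hx hs => h.disjoint.notMem_of_mem_left hs hx
  suffices key : ∀ x y, x ∈ s → y ∉ s → #{w ∈ s | w ∈ s(x, y)} = 1 by
    rcases h.mem_of_adj he with ⟨hu, hv⟩ | ⟨hu, hv⟩
    · exact key u v hu (hnot v hv)
    · rw [Sym2.eq_swap]; exact key v u hv (hnot u hu)
  intro x y hx hy
  rw [card_eq_one]
  exact ⟨x, by ext w; simp only [mem_filter, Sym2.mem_iff, mem_singleton]; grind⟩

lemma sum_vertexSum_eq_of_isBipartiteWith [Fintype V] {s : Finset V} {t : Set V}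
    (h : G.IsBipartiteWith s t) : ∑ v ∈ s, vertexSum G f v = ∑ᶠ e ∈ G.edgeSet, f e := by
  classical
  simp_rw [vertexSum_eq_sum_incidenceFinset]
  rw [Finset.sum_comm' (t' := G.edgeFinset) (s' := fun e => {v ∈ s | v ∈ e}), ← coe_edgeFinset,
    finsum_mem_coe_finset]
  · refine Finset.sum_congr rfl fun e he => ?_
    rw [Finset.sum_const, card_filter_mem_eq_one_of_isBipartiteWith h (by simpa using he), one_smul]
  · intro v e
    simp only [mem_filter, incidenceFinset_eq_filter, mem_edgeFinset]
    tauto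

lemma SimpleGraph.Connected.adj_of_forall_mem_edgeSet (hG : G.Connected) {c w : V}
    (hc : ∀ e ∈ G.edgeSet, c ∈ e) (hw : w ≠ c) : G.Adj c w := by
  have : Nontrivial V := ⟨⟨w, c, hw⟩⟩
  obtain ⟨u, hwu⟩ := hG.preconnected.exists_adj_of_nontrivial w
  rcases Sym2.mem_iff.mp (hc s(w, u) hwu) with rfl | rfl
  · exact absurd rfl hw
  · exact hwu.symm

lemma vertexSum_eq_of_forall_mem_edgeSet {c w : V} (hc : ∀ e ∈ G.edgeSet, c ∈ e)
    (hcw : G.Adj c w) : vertexSum G f w = f s(c, w) := by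
  have : G.incidenceSet w = {s(c, w)} := by
    ext e
    refine ⟨fun ⟨he, hwe⟩ => (Sym2.mem_and_mem_iff hcw.ne).mp ⟨hc e he, hwe⟩, ?_⟩
    rintro rfl
    exact ⟨hcw, Sym2.mem_mk_right c w⟩
  rw [vertexSum, this, finsum_mem_singleton]

lemma vertexSum_injOn_of_forall_mem_edgeSet (hG : G.Connected) (hf : Set.InjOn f G.edgeSet)
    {c : V} (hc : ∀ e ∈ G.edgeSet, c ∈ e) : Set.InjOn (vertexSum G f) {c}ᶜ := by
  intro v hv w hw hvw
  have hcv := hG.adj_of_forall_mem_edgeSet hc hv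
  have hcw := hG.adj_of_forall_mem_edgeSet hc hw
  rw [vertexSum_eq_of_forall_mem_edgeSet hc hcv, vertexSum_eq_of_forall_mem_edgeSet hc hcw] at hvw
  exact Sym2.congr_right.mp (hf hcv hcw hvw)

lemma card_mul_eq_card_mul_of_isBipartiteWith [Fintype V] {s t : Finset V} {a b : ℕ}
    (h : G.IsBipartiteWith s t) (ha : ∀ v ∈ s, vertexSum G f v = a)
    (hb : ∀ v ∈ t, vertexSum G f v = b) : #s * a = #t * b := by
  calc #s * a = ∑ v ∈ s, vertexSum G f v := by rw [sum_congr rfl ha, sum_const, smul_eq_mul]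
    _ = ∑ v ∈ t, vertexSum G f v := by
      rw [sum_vertexSum_eq_of_isBipartiteWith h, sum_vertexSum_eq_of_isBipartiteWith h.symm]
    _ = #t * b := by rw [sum_congr rfl hb, sum_const, smul_eq_mul]

lemma card_le_one_of_isBipartiteWith_of_card_eq_one (hG : G.Connected)
    (hf : Set.InjOn f G.edgeSet) {s t : Finset V} {b : ℕ} (h : G.IsBipartiteWith s t)
    (hs : #s = 1) (hb : ∀ v ∈ t, vertexSum G f v = b) : #t ≤ 1 := by
  obtain ⟨c, rfl⟩ := card_eq_one.mp hs
  rw [coe_singleton] at h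
  have hc : ∀ e ∈ G.edgeSet, c ∈ e := by
    intro e he
    induction e using Sym2.ind with | _ u v => ?_
    rcases h.mem_of_adj he with ⟨rfl, -⟩ | ⟨-, rfl⟩ <;> simp
  have htc : ∀ v ∈ t, v ∈ ({c}ᶜ : Set V) := fun v hv hvc => h.disjoint.notMem_of_mem_left hvc hv
  refine card_le_one.mpr fun v hv w hw => ?_
  exact vertexSum_injOn_of_forall_mem_edgeSet hG hf hc (htc v hv) (htc w hw)
    ((hb v hv).trans (hb w hw).symm)

lemma exists_isBipartiteWith_of_colorCount_eq_two [Fintype V]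
    (hadj : ∀ u v, G.Adj u v → vertexSum G f u ≠ vertexSum G f v) (hf : colorCount G f = 2) :
    ∃ (s t : Finset V) (a b : ℕ), a ≠ b ∧ G.IsBipartiteWith s t ∧ #s + #t = Fintype.card V ∧
      0 < #s ∧ 0 < #t ∧ (∀ v ∈ s, vertexSum G f v = a) ∧ ∀ v ∈ t, vertexSum G f v = b := by
  classical
  obtain ⟨a, b, hab, hrange⟩ := Set.ncard_eq_two.mp hf
  have hval : ∀ v, vertexSum G f v = a ∨ vertexSum G f v = b := fun v => by
    simpa [hrange] using Set.mem_range_self (f := vertexSum G f) v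
  set s := (vertexSum G f ⁻¹' {a}).toFinset
  set t := (vertexSum G f ⁻¹' {b}).toFinset
  have hst : G.IsBipartiteWith s t := by simpa [s, t] using isBipartiteWith_preimage hab hadj hval
  have hcard : #s + #t = Fintype.card V := by
    rw [← card_union_of_disjoint (disjoint_coe.mp hst.disjoint), ← card_univ]
    congr 1
    exact eq_univ_of_forall fun v => by simpa [s, t] using hval v
  have hs : 0 < #s := by
    obtain ⟨v, hv⟩ : a ∈ Set.range (vertexSum G f) := by simp [hrange]
    exact card_pos.mpr ⟨v, by simpa [s] using hv⟩
  have ht : 0 < #t := by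
    obtain ⟨v, hv⟩ : b ∈ Set.range (vertexSum G f) := by simp [hrange]
    exact card_pos.mpr ⟨v, by simpa [t] using hv⟩
  exact ⟨s, t, a, b, hab, hst, hcard, hs, ht, by simp [s], by simp [t]⟩

theorem no_order_three_four_chiLA_two (V : Type) [Fintype V] (G : SimpleGraph V)
    (hG : G.Connected) (hV : Fintype.card V = 3 ∨ Fintype.card V = 4) :
    chiLA G ≠ 2 := by
  intro hχ
  obtain ⟨f, ⟨hbij, hadj⟩, hcount⟩ :=
    exists_isLocalAntimagic_colorCount_eq_of_chiLA_eq hχ two_ne_zero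
  obtain ⟨s, t, a, b, hab, hst, hcard, hs, ht, hsa, htb⟩ :=
    exists_isBipartiteWith_of_colorCount_eq_two hadj hcount
  obtain hs1 | ht1 | ⟨hs2, ht2⟩ : #s = 1 ∨ #t = 1 ∨ (#s = 2 ∧ #t = 2) := by omega
  · have := card_le_one_of_isBipartiteWith_of_card_eq_one hG hbij.injOn hst hs1 htb
    omega
  · have := card_le_one_of_isBipartiteWith_of_card_eq_one hG hbij.injOn hst.symm ht1 hsa
    omega
  · have := card_mul_eq_card_mul_of_isBipartiteWith hst hsa htb
    rw [hs2, ht2] at this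
    omega
end

section
/- Let G be a connected graph of size q admitting a local antimagic labeling f with exactly two distinct induced vertex sums x < y, attained by X and Y vertices respectively. Then G is bipartite with parts of sizes X and Y, X > Y, and xX = yY = q(q+1)/2. -/
open scoped BigOperators

/-!
Since only the two sums `x < y` occur and adjacent vertices get different sums, every edge has
exactly one endpoint with sum `x` and one with sum `y`; in particular the graph is 2-colourable.
Summing the vertex sums over either class therefore counts every edge label exactly once, so
`x X = y Y = 1 + ⋯ + q`, and `x < y` forces `Y < X`.
-/

open Finset

theorem Finset.sum_Icc_one_id (n : ℕ) : ∑ k ∈ Icc 1 n, k = n * (n + 1) / 2 := by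
  have h := Finset.sum_range_id (n + 1)
  rw [range_eq_Ico, sum_eq_sum_Ico_succ_bot (Nat.succ_pos n)] at h
  simp only [zero_add, Nat.succ_eq_add_one, Ico_add_one_right_eq_Icc, Nat.add_sub_cancel] at h
  rw [h, Nat.mul_comm]

theorem Set.BijOn.sum_eq_of_Icc_one {α : Type*} {s : Finset α} {f : α → ℕ} {n : ℕ}
    (h : Set.BijOn f s (Set.Icc 1 n)) : ∑ a ∈ s, f a = n * (n + 1) / 2 := by
  classical
  have himage : s.image f = Finset.Icc 1 n := by
    rw [← Finset.coe_inj, coe_image, h.image_eq, coe_Icc]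
  rw [← sum_Icc_one_id, ← himage, sum_image h.injOn]

namespace SimpleGraph

variable {V : Type*} (G : SimpleGraph V)

theorem colorable_two_of_forall_eq_or_eq {α : Type*} (s : V → α) {a b : α}
    (hs : ∀ v, s v = a ∨ s v = b) (hadj : ∀ u v, G.Adj u v → s u ≠ s v) : G.Colorable 2 := by
  classical
  refine (Coloring.mk (fun v => decide (s v = a)) fun {u v} huv hcol => hadj u v huv ?_).colorable
  rcases hs u with hu | hu <;> rcases hs v with hv | hv <;> simp_all

theorem existsUnique_mem_edge_of_forall_eq_or_eq {α : Type*} (s : V → α) {a b : α}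
    (hs : ∀ v, s v = a ∨ s v = b) (hadj : ∀ u v, G.Adj u v → s u ≠ s v) {e : Sym2 V}
    (he : e ∈ G.edgeSet) : ∃! v, v ∈ e ∧ s v = a := by
  induction e with
  | _ u w =>
    have huw := hadj u w he
    rcases hs u with hu | hu <;> rcases hs w with hw | hw
    · exact absurd (hu.trans hw.symm) huw
    · exact ⟨u, ⟨Sym2.mem_mk_left u w, hu⟩, by
        rintro v ⟨hv, hva⟩
        rcases Sym2.mem_iff.mp hv with rfl | rfl
        exacts [rfl, absurd (hu.trans hva.symm) huw]⟩
    · exact ⟨w, ⟨Sym2.mem_mk_right u w, hw⟩, by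
        rintro v ⟨hv, hva⟩
        rcases Sym2.mem_iff.mp hv with rfl | rfl
        exacts [absurd (hva.trans hw.symm) huw, rfl]⟩
    · exact absurd (hu.trans hw.symm) huw

theorem vertexSum_eq_sum_filter [Fintype G.edgeSet] [DecidableEq V] (f : Sym2 V → ℕ) (v : V) :
    vertexSum G f v = ∑ e ∈ G.edgeFinset with v ∈ e, f e := by
  rw [vertexSum, ← finsum_mem_coe_finset]
  congr 1
  ext e
  simp [incidenceSet]

theorem sum_vertexSum_eq_sum_edgeFinset [Fintype G.edgeSet] [DecidableEq V] (f : Sym2 V → ℕ)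
    (S : Finset V) (hS : ∀ e ∈ G.edgeSet, ∃! v, v ∈ e ∧ v ∈ S) :
    ∑ v ∈ S, vertexSum G f v = ∑ e ∈ G.edgeFinset, f e := by
  simp_rw [vertexSum_eq_sum_filter]
  rw [sum_comm' (t' := G.edgeFinset) (s' := fun e => {v ∈ S | v ∈ e}) (by intro v e; simp only [mem_filter]; tauto)]
  refine sum_congr rfl fun e he => ?_
  obtain ⟨v, hv, huniq⟩ := hS e (mem_edgeFinset.mp he)
  have : {v ∈ S | v ∈ e} = {v} := by
    ext w
    simp only [mem_filter, mem_singleton]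
    exact ⟨fun hw => huniq w hw.symm, fun hw => hw ▸ hv.symm⟩
  simp [this]

end SimpleGraph

open SimpleGraph in
theorem IsLocalAntimagic.mul_ncard_eq_of_forall_eq_or_eq {V : Type*} [Finite V]
    {G : SimpleGraph V} {f : Sym2 V → ℕ} (hf : IsLocalAntimagic G f) {a b : ℕ}
    (hall : ∀ v, vertexSum G f v = a ∨ vertexSum G f v = b) :
    a * {v | vertexSum G f v = a}.ncard = G.edgeSet.ncard * (G.edgeSet.ncard + 1) / 2 := by
  classical
  have := Fintype.ofFinite V
  obtain ⟨hbij, hadj⟩ := hf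
  rw [← coe_edgeFinset] at hbij
  calc a * {v | vertexSum G f v = a}.ncard
      = ∑ v with vertexSum G f v = a, vertexSum G f v := by
        rw [sum_congr rfl fun v hv => (mem_filter.mp hv).2, sum_const, smul_eq_mul, mul_comm,
          ← Set.ncard_coe_finset, coe_filter_univ]
    _ = ∑ e ∈ G.edgeFinset, f e := by
        refine G.sum_vertexSum_eq_sum_edgeFinset f _ fun e he => ?_
        simpa using G.existsUnique_mem_edge_of_forall_eq_or_eq _ hall hadj he
    _ = _ := by rw [hbij.sum_eq_of_Icc_one, ← coe_edgeFinset, Set.ncard_coe_finset]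

theorem two_color_local_antimagic_general {V : Type*} [Fintype V] (G : SimpleGraph V)
    (q : ℕ) (hq : G.edgeSet.ncard = q)
    (f : Sym2 V → ℕ) (hf : IsLocalAntimagic G f) (x y : ℕ) (hxy : x < y)
    (hall : ∀ v : V, vertexSum G f v = x ∨ vertexSum G f v = y)
    (hy : ∃ v, vertexSum G f v = y)
    (X Y : ℕ) (hX : {v : V | vertexSum G f v = x}.ncard = X)
    (hY : {v : V | vertexSum G f v = y}.ncard = Y) :
    G.Colorable 2 ∧ Y < X ∧ x * X = q * (q + 1) / 2 ∧ y * Y = q * (q + 1) / 2 := by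
  have hxX := hf.mul_ncard_eq_of_forall_eq_or_eq hall
  have hyY := hf.mul_ncard_eq_of_forall_eq_or_eq fun v => (hall v).symm
  rw [hX, hq] at hxX
  rw [hY, hq] at hyY
  have hYpos : 0 < Y := hY ▸ (Set.ncard_pos).mpr hy
  refine ⟨G.colorable_two_of_forall_eq_or_eq _ hall hf.2, ?_, hxX, hyY⟩
  nlinarith

theorem two_color_local_antimagic {V : Type*} [Fintype V] (G : SimpleGraph V)
    (hG : G.Connected) (q : ℕ) (hq : G.edgeSet.ncard = q)
    (f : Sym2 V → ℕ) (hf : IsLocalAntimagic G f) (x y : ℕ) (hxy : x < y)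
    (hall : ∀ v : V, vertexSum G f v = x ∨ vertexSum G f v = y)
    (hx : ∃ v, vertexSum G f v = x) (hy : ∃ v, vertexSum G f v = y)
    (X Y : ℕ) (hX : {v : V | vertexSum G f v = x}.ncard = X)
    (hY : {v : V | vertexSum G f v = y}.ncard = Y) :
    G.Colorable 2 ∧ Y < X ∧ x * X = q * (q + 1) / 2 ∧ y * Y = q * (q + 1) / 2 :=
  two_color_local_antimagic_general G q hq f hf x y hxy hall hy X Y hX hY
end

section
/- For every integer p ≥ 3, χ_la(K_{p,p}) = 3. -/
open scoped BigOperators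

/-!
Lower bound: in a local antimagic labeling of `K_{p,p}` every vertex sum on one side differs from
every vertex sum on the other. If there were only two sums, each side would be constant, say `u`
and `v`; but both sides add up every label exactly once, so `p u = p v`.

Upper bound: a `p × p` matrix with entries `1, …, p²`, constant row sums `R` and exactly two column
sums `C₁ ≠ C₂`, both different from `R`, labels `K_{p,p}` with three vertex sums. For `p = 2q`,
fill four `q × q` blocks with `1, …, q²` and three complemented or shifted copies of it. For odd
`p`, take the square `p (a + b) + (2a + b) + 1` over `ZMod p`, whose rows and columns all have the
same sum, and cyclically shift one of its rows.
-/

open Function Set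

namespace CompleteBipartite

variable {α β : Type*}

lemma incidenceSet_inl (a : α) :
    (completeBipartiteGraph α β).incidenceSet (Sum.inl a) =
      range fun b : β => s(Sum.inl a, Sum.inr b) := by
  ext e
  induction e with
  | _ x y =>
    rcases x with x | x <;> rcases y with y | y <;> simp [SimpleGraph.incidenceSet, eq_comm]

lemma incidenceSet_inr (b : β) :
    (completeBipartiteGraph α β).incidenceSet (Sum.inr b) =
      range fun a : α => s(Sum.inl a, Sum.inr b) := by
  ext e
  induction e with
  | _ x y =>
    rcases x with x | x <;> rcases y with y | y <;> simp [SimpleGraph.incidenceSet, eq_comm]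

lemma vertexSum_inl [Fintype β] (f : Sym2 (α ⊕ β) → ℕ) (a : α) :
    vertexSum (completeBipartiteGraph α β) f (Sum.inl a) = ∑ b, f s(Sum.inl a, Sum.inr b) := by
  rw [vertexSum, incidenceSet_inl, finsum_mem_range (by intro b b' h; simpa using h),
    finsum_eq_sum_of_fintype]

lemma vertexSum_inr [Fintype α] (f : Sym2 (α ⊕ β) → ℕ) (b : β) :
    vertexSum (completeBipartiteGraph α β) f (Sum.inr b) = ∑ a, f s(Sum.inl a, Sum.inr b) := by
  rw [vertexSum, incidenceSet_inr, finsum_mem_range (by intro a a' h; simpa using h),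
    finsum_eq_sum_of_fintype]

lemma range_vertexSum (f : Sym2 (α ⊕ β) → ℕ) :
    range (vertexSum (completeBipartiteGraph α β) f) =
      (range fun a => vertexSum (completeBipartiteGraph α β) f (Sum.inl a)) ∪
        range fun b => vertexSum (completeBipartiteGraph α β) f (Sum.inr b) := by
  rw [← Set.Sum.elim_range]
  congr
  ext (a | b) <;> rfl

variable [Fintype α] [Fintype β]

lemma sum_vertexSum_inl (f : Sym2 (α ⊕ β) → ℕ) :
    ∑ a, vertexSum (completeBipartiteGraph α β) f (Sum.inl a) =
      ∑ b, vertexSum (completeBipartiteGraph α β) f (Sum.inr b) := by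
  simp only [vertexSum_inl, vertexSum_inr]
  exact Finset.sum_comm

lemma three_le_colorCount [Nonempty α] (hcard : Fintype.card α = Fintype.card β)
    {f : Sym2 (α ⊕ β) → ℕ}
    (hf : ∀ a b, vertexSum (completeBipartiteGraph α β) f (Sum.inl a) ≠
      vertexSum (completeBipartiteGraph α β) f (Sum.inr b)) :
    3 ≤ colorCount (completeBipartiteGraph α β) f := by
  have : Nonempty β := Fintype.card_pos_iff.mp (hcard ▸ Fintype.card_pos)
  obtain ⟨a₀⟩ := ‹Nonempty α›
  obtain ⟨b₀⟩ := ‹Nonempty β›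
  have htotal := sum_vertexSum_inl f
  set S := vertexSum (completeBipartiteGraph α β) f
  set U := range fun a => S (Sum.inl a)
  set V := range fun b => S (Sum.inr b)
  have hdisj : Disjoint U V := by
    rw [Set.disjoint_left]
    rintro _ ⟨a, rfl⟩ ⟨b, hb⟩
    exact hf a b hb.symm
  rw [colorCount, range_vertexSum, Set.ncard_union_eq hdisj (finite_range _) (finite_range _)]
  by_contra! hlt
  have hU := (ncard_pos (s := U) (finite_range _)).mpr (range_nonempty _)
  have hV := (ncard_pos (s := V) (finite_range _)).mpr (range_nonempty _)
  have hU₁ : U.ncard ≤ 1 := by omega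
  have hV₁ : V.ncard ≤ 1 := by omega
  have hu : ∀ a, S (Sum.inl a) = S (Sum.inl a₀) := fun a =>
    (ncard_le_one_iff (finite_range _)).mp hU₁ (mem_range_self a) (mem_range_self a₀)
  have hv : ∀ b, S (Sum.inr b) = S (Sum.inr b₀) := fun b =>
    (ncard_le_one_iff (finite_range _)).mp hV₁ (mem_range_self b) (mem_range_self b₀)
  simp only [hu, hv, Finset.sum_const, Finset.card_univ, smul_eq_mul, hcard] at htotal
  exact hf a₀ b₀ (Nat.eq_of_mul_eq_mul_left Fintype.card_pos htotal)

end CompleteBipartite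

section MatrixLabel

open CompleteBipartite

variable {α β : Type*}

def rowSum [Fintype β] (M : α → β → ℕ) (a : α) : ℕ := ∑ b, M a b

def colSum [Fintype α] (M : α → β → ℕ) (b : β) : ℕ := ∑ a, M a b

def matrixLabel (M : α → β → ℕ) : Sym2 (α ⊕ β) → ℕ :=
  Sym2.lift ⟨fun x y => match x, y with
    | .inl a, .inr b | .inr b, .inl a => M a b
    | _, _ => 0, by rintro (a | b) (a' | b') <;> rfl⟩

lemma bijOn_Icc_of_injective {ι : Type*} [Fintype ι] {f : ι → ℕ} (hf : Injective f)
    (hmem : ∀ i, f i ∈ Icc 1 (Fintype.card ι)) : BijOn f univ (Icc 1 (Fintype.card ι)) := by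
  refine ⟨fun i _ => hmem i, hf.injOn, ?_⟩
  refine (eq_of_subset_of_ncard_le ?_ ?_ (finite_Icc _ _)).symm.subset
  · rintro _ ⟨i, -, rfl⟩
    exact hmem i
  · rw [ncard_image_of_injective _ hf, ncard_univ, Nat.card_eq_fintype_card, ncard_Icc_nat]
    omega

lemma vertexSum_matrixLabel_inl [Fintype β] (M : α → β → ℕ) (a : α) :
    vertexSum (completeBipartiteGraph α β) (matrixLabel M) (Sum.inl a) = rowSum M a :=
  vertexSum_inl _ a

lemma vertexSum_matrixLabel_inr [Fintype α] (M : α → β → ℕ) (b : β) :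
    vertexSum (completeBipartiteGraph α β) (matrixLabel M) (Sum.inr b) = colSum M b :=
  vertexSum_inr _ b

structure IsThreeSumMatrix [Fintype α] [Fintype β] (M : α → β → ℕ) (R C₁ C₂ : ℕ) : Prop where
  injective : Injective (uncurry M)
  mem_Icc : ∀ a b, M a b ∈ Icc 1 (Fintype.card α * Fintype.card β)
  rowSum_eq : ∀ a, rowSum M a = R
  range_colSum : range (colSum M) = {C₁, C₂}
  ne₁ : R ≠ C₁
  ne₂ : R ≠ C₂
  ne₁₂ : C₁ ≠ C₂

namespace IsThreeSumMatrix

variable [Fintype α] [Fintype β] {M : α → β → ℕ} {R C₁ C₂ : ℕ}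

lemma reindex {γ δ : Type*} [Fintype γ] [Fintype δ] (h : IsThreeSumMatrix M R C₁ C₂)
    (e : γ ≃ α) (e' : δ ≃ β) : IsThreeSumMatrix (fun c d => M (e c) (e' d)) R C₁ C₂ where
  injective := h.injective.comp (e.prodCongr e').injective
  mem_Icc c d := by
    rw [Fintype.card_congr e, Fintype.card_congr e']
    exact h.mem_Icc _ _
  rowSum_eq c := by
    rw [rowSum, e'.sum_comp (M (e c))]
    exact h.rowSum_eq _
  range_colSum := by
    have : colSum (fun c d => M (e c) (e' d)) = colSum M ∘ e' := by
      ext d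
      exact e.sum_comp (M · (e' d))
    rw [this, e'.surjective.range_comp, h.range_colSum]
  ne₁ := h.ne₁
  ne₂ := h.ne₂
  ne₁₂ := h.ne₁₂

lemma isLocalAntimagic (h : IsThreeSumMatrix M R C₁ C₂) :
    IsLocalAntimagic (completeBipartiteGraph α β) (matrixLabel M) := by
  have he : Injective fun x : α × β => s(Sum.inl x.1, Sum.inr x.2) := by
    rintro ⟨a, b⟩ ⟨a', b'⟩ h
    simpa using h
  refine ⟨?_, ?_⟩
  · rw [SimpleGraph.edgeSet_completeBipartiteGraph, ncard_range_of_injective he,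
      Nat.card_eq_fintype_card, ← image_univ, ← bijOn_comp_iff he.injOn]
    refine bijOn_Icc_of_injective (f := uncurry M) h.injective fun x => ?_
    rw [Fintype.card_prod]
    exact h.mem_Icc x.1 x.2
  · have hne : ∀ a b, rowSum M a ≠ colSum M b := fun a b hab => by
      rcases h.range_colSum ▸ mem_range_self b with h₁ | h₂
      · exact h.ne₁ (h.rowSum_eq a ▸ hab.trans h₁)
      · exact h.ne₂ (h.rowSum_eq a ▸ hab.trans h₂)
    rintro (a | b) (a' | b') hadj
    · simp at hadj
    · rw [vertexSum_matrixLabel_inl, vertexSum_matrixLabel_inr]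
      exact hne a b'
    · rw [vertexSum_matrixLabel_inl, vertexSum_matrixLabel_inr]
      exact (hne a' b).symm
    · simp at hadj

lemma colorCount_eq [Nonempty α] (h : IsThreeSumMatrix M R C₁ C₂) :
    colorCount (completeBipartiteGraph α β) (matrixLabel M) = 3 := by
  have hrow : rowSum M = fun _ => R := funext h.rowSum_eq
  rw [colorCount, range_vertexSum]
  simp only [vertexSum_matrixLabel_inl, vertexSum_matrixLabel_inr]
  rw [hrow, range_const, h.range_colSum, singleton_union, ncard_eq_three]
  exact ⟨R, C₁, C₂, h.ne₁, h.ne₂, h.ne₁₂, rfl⟩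

end IsThreeSumMatrix

end MatrixLabel

section Even

/-- On `x ∈ [1, n]` the four blocks take values in `[1, n]`, `[3n + 1, 4n]`, `[n + 1, 2n]` and
`[2n + 1, 3n]`; the two blocks of a row add up to `4n + 1`, those of a column to `2n + 1` or
`6n + 1`. -/
def evenBlock (n : ℕ) : Bool → Bool → ℕ → ℕ
  | false, false, x => x
  | false, true, x => 4 * n + 1 - x
  | true, false, x => 2 * n + 1 - x
  | true, true, x => 2 * n + x

lemma evenBlock_mem_Icc {n x : ℕ} (hx : x ∈ Icc 1 n) (s t : Bool) :
    evenBlock n s t x ∈ Icc 1 (4 * n) := by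
  obtain ⟨h₁, h₂⟩ := hx
  cases s <;> cases t <;> simp only [evenBlock, mem_Icc] <;> omega

lemma evenBlock_inj {n x x' : ℕ} (hx : x ∈ Icc 1 n) (hx' : x' ∈ Icc 1 n) {s t s' t' : Bool}
    (h : evenBlock n s t x = evenBlock n s' t' x') : s = s' ∧ t = t' ∧ x = x' := by
  obtain ⟨h₁, h₂⟩ := hx
  obtain ⟨h₁', h₂'⟩ := hx'
  cases s <;> cases t <;> cases s' <;> cases t' <;> simp only [evenBlock] at h <;>
    simp only [true_and, Bool.false_eq_true, Bool.true_eq_false, false_and] <;> omega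

lemma evenBlock_right_true_add_false {n x : ℕ} (hx : x ∈ Icc 1 n) (s : Bool) :
    evenBlock n s true x + evenBlock n s false x = 4 * n + 1 := by
  obtain ⟨h₁, h₂⟩ := hx
  cases s <;> simp only [evenBlock] <;> omega

lemma evenBlock_left_true_add_false {n x : ℕ} (hx : x ∈ Icc 1 n) (t : Bool) :
    evenBlock n true t x + evenBlock n false t x = (if t then 6 * n else 2 * n) + 1 := by
  obtain ⟨h₁, h₂⟩ := hx
  cases t <;> simp only [evenBlock, Bool.false_eq_true, if_true, if_false] <;> omega

def evenMatrix (q : ℕ) (i j : Bool × Fin q) : ℕ :=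
  evenBlock (q * q) i.1 j.1 (finProdFinEquiv (i.2, j.2) + 1)

lemma finProdFinEquiv_add_one_mem_Icc {q : ℕ} (a b : Fin q) :
    (finProdFinEquiv (a, b) : ℕ) + 1 ∈ Icc 1 (q * q) :=
  ⟨by omega, (finProdFinEquiv (a, b)).is_lt⟩

lemma rowSum_evenMatrix (q : ℕ) (i : Bool × Fin q) :
    rowSum (evenMatrix q) i = q * (4 * (q * q) + 1) := by
  simp only [rowSum, Fintype.sum_prod_type_right, Fintype.sum_bool, evenMatrix]
  rw [Finset.sum_congr rfl fun b _ =>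
    evenBlock_right_true_add_false (finProdFinEquiv_add_one_mem_Icc i.2 b) i.1]
  simp

lemma colSum_evenMatrix (q : ℕ) (j : Bool × Fin q) :
    colSum (evenMatrix q) j = q * ((if j.1 then 6 * (q * q) else 2 * (q * q)) + 1) := by
  simp only [colSum, Fintype.sum_prod_type_right, Fintype.sum_bool, evenMatrix]
  rw [Finset.sum_congr rfl fun a _ =>
    evenBlock_left_true_add_false (finProdFinEquiv_add_one_mem_Icc a j.2) j.1]
  simp

lemma evenMatrix_injective (q : ℕ) : Injective (uncurry (evenMatrix q)) := by
  rintro ⟨⟨s, a⟩, ⟨t, b⟩⟩ ⟨⟨s', a'⟩, ⟨t', b'⟩⟩ h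
  obtain ⟨rfl, rfl, hx⟩ := evenBlock_inj (finProdFinEquiv_add_one_mem_Icc a b)
    (finProdFinEquiv_add_one_mem_Icc a' b') h
  have := finProdFinEquiv.injective (Fin.ext (Nat.add_right_cancel hx))
  simp_all

lemma isThreeSumMatrix_evenMatrix {q : ℕ} (hq : 0 < q) :
    IsThreeSumMatrix (evenMatrix q) (q * (4 * (q * q) + 1)) (q * (2 * (q * q) + 1))
      (q * (6 * (q * q) + 1)) := by
  have hqq := Nat.mul_pos hq hq
  have hcard : Fintype.card (Bool × Fin q) * Fintype.card (Bool × Fin q) = 4 * (q * q) := by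
    simp only [Fintype.card_prod, Fintype.card_bool, Fintype.card_fin]
    ring
  have b₀ : Fin q := ⟨0, hq⟩
  refine ⟨evenMatrix_injective q, fun i j => ?_, rowSum_evenMatrix q, ?_,
    (mul_right_injective₀ hq.ne').ne (by omega), (mul_right_injective₀ hq.ne').ne (by omega),
    (mul_right_injective₀ hq.ne').ne (by omega)⟩
  · rw [hcard]
    exact evenBlock_mem_Icc (finProdFinEquiv_add_one_mem_Icc _ _) _ _
  refine Subset.antisymm (range_subset_iff.mpr fun j => ?_) (insert_subset ⟨(false, b₀), ?_⟩
    (singleton_subset_iff.mpr ⟨(true, b₀), ?_⟩))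
  · rw [colSum_evenMatrix]
    cases j.1 <;> simp
  all_goals simp [colSum_evenMatrix]

end Even

section Odd

lemma eq_and_eq_of_mul_add_eq {n x y x' y' : ℕ} (hy : y < n) (hy' : y' < n)
    (h : n * x + y = n * x' + y') : x = x' ∧ y = y' := by
  have hyy : y = y' := by
    simpa [Nat.mul_add_mod, Nat.mod_eq_of_lt hy, Nat.mod_eq_of_lt hy'] using congrArg (· % n) h
  subst hyy
  exact ⟨Nat.eq_of_mul_eq_mul_left (Nat.zero_lt_of_lt hy) (Nat.add_right_cancel h), rfl⟩

variable {p : ℕ} [NeZero p]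

namespace ZMod

lemma sum_val_add_left (c : ZMod p) : ∑ b : ZMod p, (c + b).val = ∑ z : ZMod p, z.val :=
  Equiv.sum_comp (Equiv.addLeft c) val

lemma sum_val_add_right (c : ZMod p) : ∑ a : ZMod p, (a + c).val = ∑ z : ZMod p, z.val :=
  Equiv.sum_comp (Equiv.addRight c) val

lemma sum_val_two_mul_add (hp : Odd p) (c : ZMod p) :
    ∑ a : ZMod p, (2 * a + c).val = ∑ z : ZMod p, z.val := by
  let u := unitOfCoprime 2 (Nat.coprime_two_left.mpr hp)
  have hu : (u : ZMod p) = 2 := coe_unitOfCoprime 2 _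
  rw [← Equiv.sum_comp (u.mulLeft.trans (Equiv.addRight c)) val]
  simp [hu]

lemma val_add_one (hp : 1 < p) (b : ZMod p) : (b + 1).val = (b.val + 1) % p := by
  rw [val_add, val_one_eq_one_mod, Nat.mod_eq_of_lt hp]

end ZMod

/-- For odd `p` its rows and columns all have the same sum: `(a, b) ↦ (a + b, 2a + b)` is a
bijection of `(ZMod p)²` (of determinant `-1`), and each coordinate runs through `ZMod p` along
every row and, `2` being a unit, along every column. -/
def semiMagicSquare (p : ℕ) (a b : ZMod p) : ℕ := p * (a + b).val + (2 * a + b).val + 1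

lemma semiMagicSquare_injective : Injective (uncurry (semiMagicSquare p)) := by
  rintro ⟨a, b⟩ ⟨a', b'⟩ h
  obtain ⟨h₁, h₂⟩ := eq_and_eq_of_mul_add_eq (ZMod.val_lt _) (ZMod.val_lt _)
    (Nat.add_right_cancel (h : semiMagicSquare p a b = semiMagicSquare p a' b'))
  have e₁ := ZMod.val_injective p h₁
  have e₂ := ZMod.val_injective p h₂
  have ha : a = a' := by linear_combination e₂ - e₁
  exact Prod.ext ha (by linear_combination e₁ - ha)

lemma semiMagicSquare_mem_Icc (a b : ZMod p) : semiMagicSquare p a b ∈ Icc 1 (p * p) :=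
  ⟨by simp [semiMagicSquare], Nat.mul_add_lt_mul_of_lt_of_lt (ZMod.val_lt _) (ZMod.val_lt _)⟩

omit [NeZero p] in
lemma semiMagicSquare_zero_left (b : ZMod p) : semiMagicSquare p 0 b = (p + 1) * b.val + 1 := by
  simp only [semiMagicSquare, zero_add, mul_zero]
  ring

variable (p) in
def magicConstant : ℕ := (p + 1) * ∑ z : ZMod p, z.val + p

lemma rowSum_semiMagicSquare (a : ZMod p) : rowSum (semiMagicSquare p) a = magicConstant p := by
  simp only [rowSum, semiMagicSquare, Finset.sum_add_distrib, ← Finset.mul_sum,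
    ZMod.sum_val_add_left, Finset.sum_const, Finset.card_univ, ZMod.card, smul_eq_mul,
    magicConstant]
  ring

lemma colSum_semiMagicSquare (hp : Odd p) (b : ZMod p) :
    colSum (semiMagicSquare p) b = magicConstant p := by
  simp only [colSum, semiMagicSquare, Finset.sum_add_distrib, ← Finset.mul_sum,
    ZMod.sum_val_add_right, ZMod.sum_val_two_mul_add hp, Finset.sum_const, Finset.card_univ,
    ZMod.card, smul_eq_mul, magicConstant]
  ring

/-- `semiMagicSquare` with row `0` cyclically shifted by one place. That row is the progression
`(p + 1) b + 1`, so every column sum goes up by `p + 1`, except the last one, which wraps around. -/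
def oddMatrix (p : ℕ) (a b : ZMod p) : ℕ := semiMagicSquare p a (b + if a = 0 then 1 else 0)

lemma oddMatrix_injective : Injective (uncurry (oddMatrix p)) := by
  rintro ⟨a, b⟩ ⟨a', b'⟩ h
  obtain ⟨rfl, hb⟩ := Prod.ext_iff.mp (semiMagicSquare_injective
    (a₁ := (a, b + if a = 0 then 1 else 0)) (a₂ := (a', b' + if a' = 0 then 1 else 0)) h)
  exact Prod.ext rfl (add_right_cancel hb)

lemma rowSum_oddMatrix (a : ZMod p) : rowSum (oddMatrix p) a = magicConstant p := by
  rw [← rowSum_semiMagicSquare a]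
  exact Equiv.sum_comp (Equiv.addRight _) (semiMagicSquare p a)

lemma colSum_oddMatrix_add (hp : Odd p) (b : ZMod p) :
    colSum (oddMatrix p) b + semiMagicSquare p 0 b =
      magicConstant p + semiMagicSquare p 0 (b + 1) := by
  classical
  rw [← colSum_semiMagicSquare hp b, colSum, colSum, Fintype.sum_eq_add_sum_compl 0,
    Fintype.sum_eq_add_sum_compl 0 (fun a => semiMagicSquare p a b),
    Finset.sum_congr rfl fun a ha => by rw [oddMatrix, if_neg (by simpa using ha), add_zero]]
  simp only [oddMatrix, if_pos]
  ring

lemma colSum_oddMatrix_of_lt (hp : Odd p) (hp₁ : 1 < p) {b : ZMod p} (hb : b.val + 1 < p) :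
    colSum (oddMatrix p) b = magicConstant p + (p + 1) := by
  have h := colSum_oddMatrix_add hp b
  rw [semiMagicSquare_zero_left, semiMagicSquare_zero_left, ZMod.val_add_one hp₁,
    Nat.mod_eq_of_lt hb] at h
  linarith

lemma colSum_oddMatrix_of_eq (hp : Odd p) (hp₁ : 1 < p) {b : ZMod p} (hb : b.val + 1 = p) :
    colSum (oddMatrix p) b + p * p = magicConstant p + 1 := by
  have h := colSum_oddMatrix_add hp b
  rw [semiMagicSquare_zero_left, semiMagicSquare_zero_left, ZMod.val_add_one hp₁, hb,
    Nat.mod_self] at h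
  nlinarith

lemma isThreeSumMatrix_oddMatrix (hp : Odd p) (hp₁ : 1 < p) :
    IsThreeSumMatrix (oddMatrix p) (magicConstant p) (magicConstant p + (p + 1))
      (colSum (oddMatrix p) ((p - 1 : ℕ) : ZMod p)) := by
  have hlast : ((p - 1 : ℕ) : ZMod p).val + 1 = p := by
    rw [ZMod.val_cast_of_lt (by omega)]
    omega
  have hC₂ := colSum_oddMatrix_of_eq hp hp₁ hlast
  have hpp : 4 ≤ p * p := Nat.mul_le_mul hp₁ hp₁
  refine ⟨oddMatrix_injective, fun a b => ?_, rowSum_oddMatrix, ?_, by omega, by omega, by omega⟩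
  · rw [ZMod.card]
    exact semiMagicSquare_mem_Icc _ _
  refine Subset.antisymm (range_subset_iff.mpr fun b => ?_) (insert_subset ⟨0, ?_⟩
    (singleton_subset_iff.mpr ⟨_, rfl⟩))
  · rcases (Nat.succ_le_of_lt (ZMod.val_lt b)).lt_or_eq with hb | hb
    · exact Or.inl (colSum_oddMatrix_of_lt hp hp₁ hb)
    · exact Or.inr (congrArg _ (ZMod.val_injective p (by omega)))
  · exact colSum_oddMatrix_of_lt hp hp₁ (by simpa using hp₁)

end Odd

lemma exists_isThreeSumMatrix {p : ℕ} (hp : 3 ≤ p) :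
    ∃ (M : Fin p → Fin p → ℕ) (R C₁ C₂ : ℕ), IsThreeSumMatrix M R C₁ C₂ := by
  obtain ⟨q, rfl | rfl⟩ := Nat.even_or_odd' p
  · have e : Fin (2 * q) ≃ Bool × Fin q := Fintype.equivOfCardEq (by simp)
    exact ⟨_, _, _, _, (isThreeSumMatrix_evenMatrix (by omega)).reindex e e⟩
  · have e : Fin (2 * q + 1) ≃ ZMod (2 * q + 1) := Fintype.equivOfCardEq (by simp)
    exact ⟨_, _, _, _, (isThreeSumMatrix_oddMatrix (odd_two_mul_add_one q) (by omega)).reindex e e⟩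

theorem chiLA_Kpp (p : ℕ) (hp : 3 ≤ p) :
    chiLA (completeBipartiteGraph (Fin p) (Fin p)) = 3 := by
  have : Nonempty (Fin p) := ⟨⟨0, by omega⟩⟩
  obtain ⟨M, R, C₁, C₂, hM⟩ := exists_isThreeSumMatrix hp
  have hmem : 3 ∈ {n | ∃ f, IsLocalAntimagic (completeBipartiteGraph (Fin p) (Fin p)) f ∧
      colorCount (completeBipartiteGraph (Fin p) (Fin p)) f = n} :=
    ⟨_, hM.isLocalAntimagic, hM.colorCount_eq⟩
  refine le_antisymm (Nat.sInf_le hmem) (le_csInf ⟨3, hmem⟩ ?_)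
  rintro _ ⟨f, hf, rfl⟩
  exact CompleteBipartite.three_le_colorCount rfl fun a b => hf.2 _ _ (by simp)
end

section
/- Let p ≥ 4 be even. Partition 1,...,p² so that A is a p × 2 magic rectangle with entries {1,...,2p} and B is a p × (p−2) magic rectangle with entries {2p+1,...,p²}. Then the p × p matrix M = (A | B) has every row sum equal to p(p²+1)/2, each of the first two column sums equal to p(2p+1)/2, and each remaining column sum equal to p(p+1)²/2; these three values are pairwise distinct, so M yields a local antimagic labeling of K_{p,p} with exactly 3 induced sums. -/
open scoped BigOperators

/-- `A` is a magic rectangle with entries exactly `{lo, …, hi}` (each used once),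
constant row sums and constant column sums. -/
def IsMagicRectangleOn {p q : ℕ} (A : Fin p → Fin q → ℕ) (lo hi : ℕ) : Prop :=
  (Set.range fun ij : Fin p × Fin q => A ij.1 ij.2) = Set.Icc lo hi ∧
  (Function.Injective fun ij : Fin p × Fin q => A ij.1 ij.2) ∧
  (∃ R, ∀ i, ∑ j, A i j = R) ∧ (∃ C, ∀ j, ∑ i, A i j = C)

/-!
A `p × q` array whose entries are exactly `a + 1, …, a + pq` and whose rows share the sum `R` has
`p R = (a + 1) + ⋯ + (a + pq)`, so Gauss's formula forces `2 R = q (2a + pq + 1)`, and likewise for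
columns. For `A` (entries `1, …, 2p`) and `B` (entries `2p + 1, …, p²`) this yields the column sums
of `M = (A | B)` and, adding a row of `A` to a row of `B`, its row sums. Labelling the edge between
row vertex `i` and column vertex `j` of `K_{p,p}` by `M i j` turns the vertex sums into the line sums
of `M`; the labels are `1, …, p²` because the entries of `A` and `B` fill complementary intervals,
and for `p ≥ 3` the line sums satisfy `p(2p+1)/2 < p(p²+1)/2 < p(p+1)²/2`.
-/

open Function Set

theorem two_mul_sum_Icc_add {a b : ℕ} (hab : a ≤ b) :
    2 * ∑ x ∈ Finset.Icc (a + 1) b, x + a * (a + 1) = b * (b + 1) := by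
  induction b, hab using Nat.le_induction with
  | base => simp
  | succ b hab ih =>
    rw [Finset.sum_Icc_succ_top (by omega)]
    linarith

theorem sum_eq_sum_Icc_of_range_eq {ι : Type*} [Fintype ι] {f : ι → ℕ} {lo hi : ℕ}
    (hf : Injective f) (hr : range f = Icc lo hi) : ∑ i, f i = ∑ x ∈ Finset.Icc lo hi, x := by
  have himage : Finset.univ.image f = Finset.Icc lo hi := by
    apply Finset.coe_injective
    simpa using hr
  rw [← himage, Finset.sum_image fun x _ y _ h => hf h]

theorem two_mul_rowSum_of_range_eq_Icc {p q a R : ℕ} {A : Fin p → Fin q → ℕ} (hp : 0 < p)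
    (hinj : Injective (uncurry A)) (hr : range (uncurry A) = Icc (a + 1) (a + p * q))
    (hR : ∀ i, ∑ j, A i j = R) : 2 * R = q * (2 * a + p * q + 1) := by
  have htotal : p * R = ∑ x ∈ Finset.Icc (a + 1) (a + p * q), x := by
    rw [← sum_eq_sum_Icc_of_range_eq hinj hr, Fintype.sum_prod_type]
    simp [hR]
  have hgauss := two_mul_sum_Icc_add (Nat.le_add_right a (p * q))
  refine Nat.eq_of_mul_eq_mul_left hp ?_
  rw [← htotal] at hgauss
  linarith

theorem two_mul_colSum_of_range_eq_Icc {p q a C : ℕ} {A : Fin p → Fin q → ℕ} (hq : 0 < q)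
    (hinj : Injective (uncurry A)) (hr : range (uncurry A) = Icc (a + 1) (a + p * q))
    (hC : ∀ j, ∑ i, A i j = C) : 2 * C = p * (2 * a + q * p + 1) := by
  have hswap : uncurry (fun j i => A i j) = uncurry A ∘ Equiv.prodComm (Fin q) (Fin p) := rfl
  refine two_mul_rowSum_of_range_eq_Icc hq ?_ ?_ hC
  · rw [hswap]
    exact hinj.comp (Equiv.injective _)
  · rw [hswap, EquivLike.range_comp, hr, mul_comm]

section Block

variable {ι κ κ₁ κ₂ : Type*} {M : ι → κ → ℕ} {A : ι → κ₁ → ℕ} {B : ι → κ₂ → ℕ}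
  {e : κ₁ ⊕ κ₂ ≃ κ}

theorem uncurry_comp_eq_sumElim_of_block (hM : ∀ i x, M i (e x) = Sum.elim (A i) (B i) x) :
    uncurry M ∘ ((Equiv.prodSumDistrib ι κ₁ κ₂).symm.trans ((Equiv.refl ι).prodCongr e)) =
      Sum.elim (uncurry A) (uncurry B) := by
  funext x
  rcases x with ⟨i, k⟩ | ⟨i, k⟩ <;> exact hM i _

theorem range_uncurry_of_block (hM : ∀ i x, M i (e x) = Sum.elim (A i) (B i) x) :
    range (uncurry M) = range (uncurry A) ∪ range (uncurry B) := by
  rw [← Set.Sum.elim_range, ← uncurry_comp_eq_sumElim_of_block hM, EquivLike.range_comp]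

theorem injective_uncurry_of_block (hM : ∀ i x, M i (e x) = Sum.elim (A i) (B i) x)
    (hA : Injective (uncurry A)) (hB : Injective (uncurry B))
    (hAB : Disjoint (range (uncurry A)) (range (uncurry B))) : Injective (uncurry M) := by
  rw [← Equiv.injective_comp ((Equiv.prodSumDistrib ι κ₁ κ₂).symm.trans
    ((Equiv.refl ι).prodCongr e)), uncurry_comp_eq_sumElim_of_block hM]
  exact hA.sumElim hB fun a b => hAB.ne_of_mem (mem_range_self a) (mem_range_self b)

theorem range_uncurry_of_block_Icc {lo mid hi : ℕ}
    (hM : ∀ i x, M i (e x) = Sum.elim (A i) (B i) x)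
    (hA : range (uncurry A) = Icc lo mid) (hB : range (uncurry B) = Icc (mid + 1) hi)
    (hlo : lo ≤ mid + 1) (hhi : mid ≤ hi) : range (uncurry M) = Icc lo hi := by
  rw [range_uncurry_of_block hM, hA, hB]
  ext x
  simp only [mem_union, mem_Icc]
  omega

theorem injective_uncurry_of_block_Icc {lo mid hi : ℕ}
    (hM : ∀ i x, M i (e x) = Sum.elim (A i) (B i) x)
    (hAi : Injective (uncurry A)) (hBi : Injective (uncurry B))
    (hA : range (uncurry A) = Icc lo mid) (hB : range (uncurry B) = Icc (mid + 1) hi) :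
    Injective (uncurry M) := by
  refine injective_uncurry_of_block hM hAi hBi ?_
  rw [hA, hB]
  exact disjoint_left.2 fun x h₁ h₂ => by simp only [mem_Icc] at h₁ h₂; omega

theorem sum_row_of_block [Fintype κ₁] [Fintype κ₂] [Fintype κ]
    (hM : ∀ i x, M i (e x) = Sum.elim (A i) (B i) x) (i : ι) :
    ∑ j, M i j = ∑ k, A i k + ∑ k, B i k := by
  rw [← e.sum_comp, Fintype.sum_sum_type]
  simp [hM]

end Block

section CompleteBipartite

variable {α β : Type*} (M : α → β → ℕ)

def matrixEdgeLabel : Sym2 (α ⊕ β) → ℕ :=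
  Sym2.lift ⟨fun x y => match x, y with
    | .inl i, .inr j => M i j
    | .inr j, .inl i => M i j
    | _, _ => 0, by rintro (a | a) (b | b) <;> rfl⟩

@[simp]
theorem matrixEdgeLabel_mk (i : α) (j : β) :
    matrixEdgeLabel M s(.inl i, .inr j) = M i j := rfl

theorem injective_mk_inl_inr :
    Injective fun ij : α × β => (s(.inl ij.1, .inr ij.2) : Sym2 (α ⊕ β)) := by
  rintro ⟨a, b⟩ ⟨c, d⟩ h
  simpa [Sym2.eq_iff] using h

theorem completeBipartiteGraph_edgeSet :
    (completeBipartiteGraph α β).edgeSet = range fun ij : α × β => s(.inl ij.1, .inr ij.2) := by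
  ext e
  induction e using Sym2.ind with
  | _ x y => rcases x with a | a <;> rcases y with b | b <;> simp [Sym2.eq_swap]

theorem completeBipartiteGraph_incidenceSet_inl (i : α) :
    (completeBipartiteGraph α β).incidenceSet (.inl i) = range fun j => s(.inl i, .inr j) := by
  ext e
  induction e using Sym2.ind with
  | _ x y =>
    rcases x with a | a <;> rcases y with b | b <;> simp [SimpleGraph.incidenceSet, Sym2.eq_swap]

theorem completeBipartiteGraph_incidenceSet_inr (j : β) :
    (completeBipartiteGraph α β).incidenceSet (.inr j) = range fun i => s(.inl i, .inr j) := by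
  ext e
  induction e using Sym2.ind with
  | _ x y =>
    rcases x with a | a <;> rcases y with b | b <;> simp [SimpleGraph.incidenceSet, Sym2.eq_swap]

variable [Fintype α] [Fintype β]

theorem vertexSum_matrixEdgeLabel :
    vertexSum (completeBipartiteGraph α β) (matrixEdgeLabel M) =
      Sum.elim (fun i => ∑ j, M i j) (fun j => ∑ i, M i j) := by
  funext v
  rcases v with i | j
  · rw [vertexSum, completeBipartiteGraph_incidenceSet_inl,
      finsum_mem_range fun a b h => by simpa using h, finsum_eq_sum_of_fintype]
    rfl
  · rw [vertexSum, completeBipartiteGraph_incidenceSet_inr,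
      finsum_mem_range fun a b h => by simpa using h, finsum_eq_sum_of_fintype]
    rfl

theorem isLocalAntimagic_matrixEdgeLabel (hinj : Injective (uncurry M))
    (hr : range (uncurry M) = Icc 1 (Fintype.card α * Fintype.card β))
    (hne : ∀ i j, ∑ j', M i j' ≠ ∑ i', M i' j) :
    IsLocalAntimagic (completeBipartiteGraph α β) (matrixEdgeLabel M) := by
  have hcomp : matrixEdgeLabel M ∘ (fun ij : α × β => s(.inl ij.1, .inr ij.2)) = uncurry M := rfl
  have hcard : (completeBipartiteGraph α β).edgeSet.ncard = Fintype.card α * Fintype.card β := by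
    rw [completeBipartiteGraph_edgeSet, ncard_range_of_injective injective_mk_inl_inr,
      Nat.card_eq_fintype_card, Fintype.card_prod]
  refine ⟨?_, ?_⟩
  · have hbij := (hcomp ▸ hinj).injOn_range.bijOn_image
    rwa [← range_comp, hcomp, hr, ← hcard, ← completeBipartiteGraph_edgeSet] at hbij
  · rintro (i | i) (j | j) hadj
    · simp at hadj
    · simpa [vertexSum_matrixEdgeLabel] using hne i j
    · simpa [vertexSum_matrixEdgeLabel] using (hne j i).symm
    · simp at hadj

theorem colorCount_matrixEdgeLabel :
    colorCount (completeBipartiteGraph α β) (matrixEdgeLabel M) =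
      (range (fun i => ∑ j, M i j) ∪ range fun j => ∑ i, M i j).ncard := by
  rw [colorCount, vertexSum_matrixEdgeLabel, Set.Sum.elim_range]

end CompleteBipartite

theorem apply_finSumFinEquiv_of_dite {ι : Type*} {p k : ℕ} (hk : k ≤ p) {M : ι → Fin p → ℕ}
    {A : ι → Fin k → ℕ} {B : ι → Fin (p - k) → ℕ}
    (hM : ∀ i j, M i j = if h : (j : ℕ) < k then A i ⟨j, h⟩ else B i ⟨j - k, by omega⟩) :
    ∀ i x, M i (finSumFinEquiv.trans (finCongr (Nat.add_sub_cancel' hk)) x) =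
      Sum.elim (A i) (B i) x := by
  rintro i (j | j)
  · rw [hM, dif_pos (by simp)]
    rfl
  · rw [hM, dif_neg (by simp)]
    simp

theorem range_eq_pair_of_split {p k a b : ℕ} {f : Fin p → ℕ} (hk : 0 < k) (hkp : k < p)
    (ha : ∀ j : Fin p, (j : ℕ) < k → f j = a) (hb : ∀ j : Fin p, k ≤ (j : ℕ) → f j = b) :
    range f = {a, b} := by
  ext c
  constructor
  · rintro ⟨j, rfl⟩
    rcases lt_or_ge (j : ℕ) k with hj | hj
    · exact .inl (ha j hj)
    · exact .inr (hb j hj)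
  · rintro (rfl | rfl)
    · exact ⟨⟨0, by omega⟩, ha _ hk⟩
    · exact ⟨⟨k, hkp⟩, hb _ le_rfl⟩

theorem lineSums_of_append_magicRectangles {p : ℕ} (hp : 3 ≤ p) {A : Fin p → Fin 2 → ℕ}
    (hA : IsMagicRectangleOn A 1 (2 * p)) {B : Fin p → Fin (p - 2) → ℕ}
    (hB : IsMagicRectangleOn B (2 * p + 1) (p ^ 2)) {M : Fin p → Fin p → ℕ}
    (hM : ∀ i j, M i j = if h : (j : ℕ) < 2 then A i ⟨j, h⟩
      else B i ⟨(j : ℕ) - 2, by have := j.isLt; omega⟩) :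
    (∀ i, ∑ j, M i j = p * (p ^ 2 + 1) / 2) ∧
    (∀ j : Fin p, (j : ℕ) < 2 → ∑ i, M i j = p * (2 * p + 1) / 2) ∧
    (∀ j : Fin p, 2 ≤ (j : ℕ) → ∑ i, M i j = p * (p + 1) ^ 2 / 2) := by
  obtain ⟨hAr, hAi, ⟨RA, hRA⟩, ⟨CA, hCA⟩⟩ := hA
  obtain ⟨hBr, hBi, ⟨RB, hRB⟩, ⟨CB, hCB⟩⟩ := hB
  have hAr' : range (uncurry A) = Icc (0 + 1) (0 + p * 2) :=
    hAr.trans (by rw [zero_add, zero_add, mul_comm])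
  have hBr' : range (uncurry B) = Icc (2 * p + 1) (2 * p + p * (p - 2)) :=
    hBr.trans (by congr 1; zify [show 2 ≤ p by omega]; ring)
  have hRA₂ := two_mul_rowSum_of_range_eq_Icc (by omega) hAi hAr' hRA
  have hRB₂ := two_mul_rowSum_of_range_eq_Icc (by omega) hBi hBr' hRB
  have hCA₂ := two_mul_colSum_of_range_eq_Icc two_pos hAi hAr' hCA
  have hCB₂ := two_mul_colSum_of_range_eq_Icc (by omega) hBi hBr' hCB
  zify [show 2 ≤ p by omega] at hRA₂ hRB₂ hCA₂ hCB₂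
  refine ⟨fun i => ?_, fun j hj => ?_, fun j hj => ?_⟩
  · have h : 2 * (RA + RB) = p * (p ^ 2 + 1) := by
      zify; linear_combination hRA₂ + hRB₂
    rw [sum_row_of_block (apply_finSumFinEquiv_of_dite (by omega) hM), hRA, hRB]
    omega
  · have h : 2 * CA = p * (2 * p + 1) := by
      zify; linear_combination hCA₂
    simp only [hM, hj, dite_true, hCA]
    omega
  · have h : 2 * CB = p * (p + 1) ^ 2 := by
      zify; linear_combination hCB₂
    simp only [hM, show ¬ (j : ℕ) < 2 by omega, dite_false, hCB]
    omega

theorem lineSum_values_lt {p : ℕ} (hp : 3 ≤ p) :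
    p * (2 * p + 1) / 2 < p * (p ^ 2 + 1) / 2 ∧ p * (p ^ 2 + 1) / 2 < p * (p + 1) ^ 2 / 2 := by
  have h₁ : p * (2 * p + 1) + 2 ≤ p * (p ^ 2 + 1) := by nlinarith
  have h₂ : p * (p ^ 2 + 1) + 2 ≤ p * (p + 1) ^ 2 := by nlinarith
  omega

theorem Kpp_even_construction (p : ℕ) (hp : 4 ≤ p)
    (A : Fin p → Fin 2 → ℕ) (hA : IsMagicRectangleOn A 1 (2 * p))
    (B : Fin p → Fin (p - 2) → ℕ) (hB : IsMagicRectangleOn B (2 * p + 1) (p ^ 2))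
    (M : Fin p → Fin p → ℕ)
    (hM : ∀ i j, M i j = if h : (j : ℕ) < 2 then A i ⟨j, h⟩
      else B i ⟨(j : ℕ) - 2, by have := j.isLt; omega⟩) :
    (∀ i, ∑ j, M i j = p * (p ^ 2 + 1) / 2) ∧
    (∀ j : Fin p, (j : ℕ) < 2 → ∑ i, M i j = p * (2 * p + 1) / 2) ∧
    (∀ j : Fin p, 2 ≤ (j : ℕ) → ∑ i, M i j = p * (p + 1) ^ 2 / 2) ∧
    (p * (p ^ 2 + 1) / 2 ≠ p * (2 * p + 1) / 2) ∧
    (p * (p ^ 2 + 1) / 2 ≠ p * (p + 1) ^ 2 / 2) ∧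
    (p * (2 * p + 1) / 2 ≠ p * (p + 1) ^ 2 / 2) ∧
    ∃ f, IsLocalAntimagic (completeBipartiteGraph (Fin p) (Fin p)) f ∧
      colorCount (completeBipartiteGraph (Fin p) (Fin p)) f = 3 := by
  have hMe := apply_finSumFinEquiv_of_dite (by omega : 2 ≤ p) hM
  have hMr : range (uncurry M) = Icc 1 (p * p) :=
    range_uncurry_of_block_Icc hMe hA.1 (hB.1.trans (by rw [sq])) (by omega) (by nlinarith)
  have hMi := injective_uncurry_of_block_Icc hMe hA.2.1 hB.2.1 hA.1 hB.1
  obtain ⟨hrow, hcolA, hcolB⟩ := lineSums_of_append_magicRectangles (by omega) hA hB hM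
  obtain ⟨hlt₁, hlt₂⟩ := lineSum_values_lt (p := p) (by omega)
  refine ⟨hrow, hcolA, hcolB, hlt₁.ne', hlt₂.ne, (hlt₁.trans hlt₂).ne, matrixEdgeLabel M, ?_, ?_⟩
  · refine isLocalAntimagic_matrixEdgeLabel M hMi (by simpa using hMr) fun i j => ?_
    rw [hrow]
    rcases lt_or_ge (j : ℕ) 2 with hj | hj
    · rw [hcolA j hj]
      exact hlt₁.ne'
    · rw [hcolB j hj]
      exact hlt₂.ne
  · have : NeZero p := ⟨by omega⟩
    rw [colorCount_matrixEdgeLabel, funext hrow, range_const,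
      range_eq_pair_of_split two_pos (by omega) hcolA hcolB, singleton_union,
      ncard_insert_of_notMem (by simp [hlt₁.ne', hlt₂.ne]), ncard_pair (hlt₁.trans hlt₂).ne]
end

section
/- Let p = 2n+1 ≥ 3 be odd and let A be the (2n+1) × (2n+1) magic square produced by the Siamese method, whose (n+1)-st column is the arithmetic sequence 1, p+2, 2p+4, ..., p² with common difference p+1. Let M be obtained from A by cyclically shifting the (n+1)-st column up by one position. Then every column sum of M equals p(p²+1)/2, every row sum except the last equals p(p²+1)/2 + p + 1, and the last row sum equals p(p²+1)/2 − p² + 1; hence M gives a local antimagic labeling of K_{p,p} with exactly 3 induced sums. -/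
open scoped BigOperators

/-!
Shifting one column of a matrix cyclically permutes its entries and keeps every column sum, while
row `i` trades `A i c` for `A (i + 1) c`. The middle column of the Siamese square is the progression
`1, 1 + (p + 1), …, p²`, so every row sum grows by `p + 1` except the last, which drops by `p² - 1`.
Labeling the edge `{row i, column j}` of `K_{p,p}` by the entry `(i, j)` makes the vertex sums the
row and column sums, and for `p ≥ 3` the three values `S + p + 1`, `S - p² + 1`, `S` are distinct.
-/

section ShiftCol

variable {ι κ R : Type*} [AddGroup ι] [DecidableEq κ]

def shiftCol (A : ι → κ → R) (c : κ) (k : ι) : ι → κ → R :=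
  fun i j => if j = c then A (i + k) j else A i j

theorem shiftCol_apply_eq_update (A : ι → κ → R) (c : κ) (k i : ι) :
    shiftCol A c k i = Function.update (A i) c (A (i + k) c) := by
  ext j
  by_cases hj : j = c <;> simp [shiftCol, hj]

theorem sum_shiftCol_col [Fintype ι] [AddCommMonoid R] (A : ι → κ → R) (c : κ) (k : ι) (j : κ) :
    ∑ i, shiftCol A c k i j = ∑ i, A i j := by
  by_cases hj : j = c
  · simpa [shiftCol, hj] using Equiv.sum_comp (Equiv.addRight k) (A · c)
  · simp [shiftCol, hj]

theorem sum_shiftCol_row_add [Fintype κ] [AddCommMonoid R] (A : ι → κ → R) (c : κ) (k i : ι) :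
    ∑ j, shiftCol A c k i j + A i c = ∑ j, A i j + A (i + k) c := by
  rw [shiftCol_apply_eq_update, Finset.sum_update_of_mem (Finset.mem_univ c),
    ← Finset.add_sum_erase _ _ (Finset.mem_univ c), Finset.sdiff_singleton_eq_erase]
  abel

theorem sum_shiftCol_of_apply_add_eq [Fintype κ] [AddCancelCommMonoid R] (A : ι → κ → R) (c : κ)
    (k i : ι) (d : R) (h : A (i + k) c = A i c + d) :
    ∑ j, shiftCol A c k i j = ∑ j, A i j + d := by
  have := sum_shiftCol_row_add A c k i
  rw [h, ← add_assoc, add_right_comm] at this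
  exact add_right_cancel this

theorem sum_shiftCol_add_of_apply_eq_add [Fintype κ] [AddCancelCommMonoid R] (A : ι → κ → R) (c : κ)
    (k i : ι) (d : R) (h : A i c = A (i + k) c + d) :
    ∑ j, shiftCol A c k i j + d = ∑ j, A i j := by
  have := sum_shiftCol_row_add A c k i
  rw [h, ← add_assoc, add_right_comm] at this
  exact add_right_cancel this

def shiftColEquiv (c : κ) (k : ι) : ι × κ ≃ ι × κ :=
  Equiv.prodCongrLeft fun j => if j = c then Equiv.addRight k else Equiv.refl ι

theorem uncurry_shiftCol (A : ι → κ → R) (c : κ) (k : ι) :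
    Function.uncurry (shiftCol A c k) = Function.uncurry A ∘ shiftColEquiv c k := by
  ext ⟨i, j⟩
  by_cases hj : j = c <;> simp [shiftCol, shiftColEquiv, hj]

theorem range_uncurry_shiftCol (A : ι → κ → R) (c : κ) (k : ι) :
    Set.range (Function.uncurry (shiftCol A c k)) = Set.range (Function.uncurry A) := by
  rw [uncurry_shiftCol, EquivLike.range_comp]

theorem injective_uncurry_shiftCol_iff (A : ι → κ → R) (c : κ) (k : ι) :
    Function.Injective (Function.uncurry (shiftCol A c k)) ↔
      Function.Injective (Function.uncurry A) := by
  rw [uncurry_shiftCol, EquivLike.injective_comp]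

end ShiftCol

theorem sq_le_mul_sq_add_one_div_two (p : ℕ) : p ^ 2 ≤ p * (p ^ 2 + 1) / 2 := by
  rw [Nat.le_div_iff_mul_le two_pos]
  zify
  nlinarith [mul_nonneg p.cast_nonneg (sq_nonneg ((p : ℤ) - 1))]

section ArithmeticColumn

variable {κ : Type*} [DecidableEq κ] [Fintype κ] {p : ℕ} [NeZero p]
  (A : Fin p → κ → ℕ) (c : κ) {a d S : ℕ}

theorem sum_shiftCol_one_of_lt (hc : ∀ i : Fin p, A i c = a + i * d) (hrow : ∀ i, ∑ j, A i j = S)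
    (i : Fin p) (hi : (i : ℕ) + 1 < p) :
    ∑ j, shiftCol A c 1 i j = S + d := by
  rw [← hrow i]
  refine sum_shiftCol_of_apply_add_eq A c 1 i d ?_
  rw [hc, hc, Fin.val_add_one_of_lt' hi]
  ring

theorem sum_shiftCol_one_last (hc : ∀ i : Fin p, A i c = a + i * d) (hrow : ∀ i, ∑ j, A i j = S) :
    ∑ j, shiftCol A c 1 ⟨p - 1, Nat.sub_one_lt (NeZero.ne p)⟩ j = S - (p - 1) * d := by
  have hwrap : (⟨p - 1, Nat.sub_one_lt (NeZero.ne p)⟩ + 1 : Fin p) = 0 := by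
    ext
    rw [Fin.val_add, Fin.val_one', Nat.add_mod_mod, Nat.sub_add_cancel NeZero.one_le, Nat.mod_self,
      Fin.val_zero]
  have h := sum_shiftCol_add_of_apply_eq_add A c 1 ⟨p - 1, Nat.sub_one_lt (NeZero.ne p)⟩
    ((p - 1) * d) (by rw [hwrap, hc, hc, Fin.val_zero, zero_mul, add_zero])
  rw [hrow] at h
  omega

theorem range_sum_shiftCol_one (hc : ∀ i : Fin p, A i c = a + i * d) (hrow : ∀ i, ∑ j, A i j = S)
    (hp : 1 < p) :
    Set.range (fun i => ∑ j, shiftCol A c 1 i j) = {S + d, S - (p - 1) * d} := by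
  refine subset_antisymm (Set.range_subset_iff.2 fun i => ?_) ?_
  · by_cases hi : (i : ℕ) + 1 < p
    · exact .inl (sum_shiftCol_one_of_lt A c hc hrow i hi)
    · rw [show i = ⟨p - 1, Nat.sub_one_lt (NeZero.ne p)⟩ from Fin.ext (by simp only; omega)]
      exact .inr (sum_shiftCol_one_last A c hc hrow)
  · rintro _ (rfl | rfl)
    · exact ⟨⟨0, NeZero.pos p⟩, sum_shiftCol_one_of_lt A c hc hrow _ hp⟩
    · exact ⟨_, sum_shiftCol_one_last A c hc hrow⟩

end ArithmeticColumn

section BipartiteLabeling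

variable {α β : Type*}

open SimpleGraph

def bipartiteLabeling (M : α → β → ℕ) : Sym2 (α ⊕ β) → ℕ :=
  Sym2.lift ⟨fun x y => match x, y with
    | .inl i, .inr j => M i j
    | .inr j, .inl i => M i j
    | _, _ => 0, by rintro (i | i) (j | j) <;> rfl⟩

theorem incidenceSet_completeBipartiteGraph_inl (i : α) :
    (completeBipartiteGraph α β).incidenceSet (.inl i) = Set.range fun j => s(.inl i, .inr j) := by
  ext e
  induction e using Sym2.ind with
  | _ u v =>
    rcases u with u | u <;> rcases v with v | v <;>
      simp [mk'_mem_incidenceSet_iff, Sym2.eq_swap, eq_comm]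

theorem incidenceSet_completeBipartiteGraph_inr (j : β) :
    (completeBipartiteGraph α β).incidenceSet (.inr j) = Set.range fun i => s(.inl i, .inr j) := by
  ext e
  induction e using Sym2.ind with
  | _ u v =>
    rcases u with u | u <;> rcases v with v | v <;>
      simp [mk'_mem_incidenceSet_iff, Sym2.eq_swap, eq_comm]

theorem vertexSum_bipartiteLabeling_inl [Fintype β] (M : α → β → ℕ) (i : α) :
    vertexSum (completeBipartiteGraph α β) (bipartiteLabeling M) (.inl i) = ∑ j, M i j := by
  rw [vertexSum, incidenceSet_completeBipartiteGraph_inl,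
    finsum_mem_range fun _ _ h => Sum.inr_injective (Sym2.congr_right.mp h),
    finsum_eq_sum_of_fintype]
  rfl

theorem vertexSum_bipartiteLabeling_inr [Fintype α] (M : α → β → ℕ) (j : β) :
    vertexSum (completeBipartiteGraph α β) (bipartiteLabeling M) (.inr j) = ∑ i, M i j := by
  rw [vertexSum, incidenceSet_completeBipartiteGraph_inr,
    finsum_mem_range fun _ _ h => Sum.inl_injective (Sym2.congr_left.mp h),
    finsum_eq_sum_of_fintype]
  rfl

theorem range_vertexSum_bipartiteLabeling [Fintype α] [Fintype β] (M : α → β → ℕ) :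
    Set.range (vertexSum (completeBipartiteGraph α β) (bipartiteLabeling M)) =
      Set.range (fun i => ∑ j, M i j) ∪ Set.range (fun j => ∑ i, M i j) := by
  rw [← Set.Sum.elim_range]
  congr 1
  ext (i | j)
  · exact vertexSum_bipartiteLabeling_inl M i
  · exact vertexSum_bipartiteLabeling_inr M j

theorem isLocalAntimagic_bipartiteLabeling [Fintype α] [Fintype β] (M : α → β → ℕ) (N : ℕ)
    (hrange : Set.range (Function.uncurry M) = Set.Icc 1 N)
    (hinj : Function.Injective (Function.uncurry M))
    (hsums : ∀ i j, ∑ j', M i j' ≠ ∑ i', M i' j) :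
    IsLocalAntimagic (completeBipartiteGraph α β) (bipartiteLabeling M) := by
  have hinjOn : Set.InjOn (bipartiteLabeling M) (completeBipartiteGraph α β).edgeSet := by
    rw [edgeSet_completeBipartiteGraph]
    rintro _ ⟨a, rfl⟩ _ ⟨b, rfl⟩ h
    rw [hinj h]
  have hbij :
      Set.BijOn (bipartiteLabeling M) (completeBipartiteGraph α β).edgeSet (Set.Icc 1 N) := by
    convert hinjOn.bijOn_image
    rw [edgeSet_completeBipartiteGraph, ← Set.range_comp, ← hrange]
    rfl
  have hcard : (completeBipartiteGraph α β).edgeSet.ncard = N := by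
    rw [hbij.ncard_eq, ← Finset.coe_Icc, Set.ncard_coe_finset, Nat.card_Icc, Nat.add_sub_cancel]
  refine ⟨hcard ▸ hbij, ?_⟩
  rintro (i | i) (j | j) hadj <;> simp at hadj
  · rw [vertexSum_bipartiteLabeling_inl, vertexSum_bipartiteLabeling_inr]
    exact hsums i j
  · rw [vertexSum_bipartiteLabeling_inl, vertexSum_bipartiteLabeling_inr]
    exact (hsums j i).symm

theorem colorCount_bipartiteLabeling_of_sum_col_eq [Fintype α] [Fintype β] [Nonempty β]
    (M : α → β → ℕ) {s : ℕ} (hcol : ∀ j, ∑ i, M i j = s)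
    (hs : s ∉ Set.range fun i => ∑ j, M i j) :
    colorCount (completeBipartiteGraph α β) (bipartiteLabeling M) =
      (Set.range fun i => ∑ j, M i j).ncard + 1 := by
  rw [colorCount, range_vertexSum_bipartiteLabeling, funext hcol, Set.range_const,
    Set.union_singleton, Set.ncard_insert_of_notMem hs]

end BipartiteLabeling

theorem Kpp_odd_construction (n p : ℕ) (hn : 1 ≤ n) (hp : p = 2 * n + 1)
    (A : Fin p → Fin p → ℕ) (hA : IsMagicRectangleOn A 1 (p ^ 2))
    (hArow : ∀ i, ∑ j, A i j = p * (p ^ 2 + 1) / 2)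
    (hAcol : ∀ j, ∑ i, A i j = p * (p ^ 2 + 1) / 2)
    (hmid : ∀ i : Fin p, A i ⟨n, by omega⟩ = 1 + (i : ℕ) * (p + 1))
    (M : Fin p → Fin p → ℕ)
    (hM : ∀ i j, M i j = if (j : ℕ) = n then A (i + ⟨1, by omega⟩) j else A i j) :
    (∀ j, ∑ i, M i j = p * (p ^ 2 + 1) / 2) ∧
    (∀ i : Fin p, (i : ℕ) < p - 1 → ∑ j, M i j = p * (p ^ 2 + 1) / 2 + p + 1) ∧
    (∑ j, M ⟨p - 1, by omega⟩ j = p * (p ^ 2 + 1) / 2 - p ^ 2 + 1) ∧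
    ∃ f, IsLocalAntimagic (completeBipartiteGraph (Fin p) (Fin p)) f ∧
      colorCount (completeBipartiteGraph (Fin p) (Fin p)) f = 3 := by
  have : NeZero p := ⟨by omega⟩
  set S := p * (p ^ 2 + 1) / 2
  set c : Fin p := ⟨n, by omega⟩
  have hone : (⟨1, by omega⟩ : Fin p) = 1 :=
    Fin.ext (by rw [Fin.val_one', Nat.mod_eq_of_lt (by omega)])
  obtain rfl : M = shiftCol A c 1 := by
    funext i j
    simp only [hM, hone, shiftCol, Fin.ext_iff, c]
  have hcol (j : Fin p) : ∑ i, shiftCol A c 1 i j = S := (sum_shiftCol_col A c 1 j).trans (hAcol j)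
  have hSq : p ^ 2 ≤ S := sq_le_mul_sq_add_one_div_two p
  have hlastSum : S - (p - 1) * (p + 1) = S - p ^ 2 + 1 := by
    have hd : (p - 1) * (p + 1) + 1 = p ^ 2 := by
      obtain ⟨k, rfl⟩ : ∃ k, p = k + 1 := ⟨2 * n, hp⟩
      simp only [Nat.add_sub_cancel]
      ring
    omega
  have hrows := range_sum_shiftCol_one A c hmid hArow (by omega)
  rw [hlastSum] at hrows
  have hS : S ∉ ({S + (p + 1), S - p ^ 2 + 1} : Set ℕ) := by
    have : 2 ≤ p ^ 2 := by nlinarith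
    simp only [Set.mem_insert_iff, Set.mem_singleton_iff]
    omega
  refine ⟨hcol, fun i hi => ?_, (sum_shiftCol_one_last A c hmid hArow).trans hlastSum,
    bipartiteLabeling (shiftCol A c 1), ?_, ?_⟩
  · rw [sum_shiftCol_one_of_lt A c hmid hArow i (by omega), add_assoc]
  · exact isLocalAntimagic_bipartiteLabeling _ (p ^ 2) ((range_uncurry_shiftCol A c 1).trans hA.1)
      ((injective_uncurry_shiftCol_iff A c 1).2 hA.2.1)
      fun i j h => hS (hrows ▸ ⟨i, h.trans (hcol j)⟩)
  · rw [colorCount_bipartiteLabeling_of_sum_col_eq _ hcol (hrows ▸ hS), hrows,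
      Set.ncard_pair (by omega)]
end
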